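/- arXiv:2007.00070 — 4 statements merged into one kernel-verified Lean document; each statement's English description precedes it below -/
import Mathlib

section
/- Let Λ be a finite alphabet, let L ⊆ Λ* be a regular language, and let σ₁, …, σₙ ∈ Λ* be words. Then the set {(t₁, …, tₙ) ∈ ℕⁿ : σ₁^{t₁}σ₂^{t₂}⋯σₙ^{tₙ} ∈ L} is definable in (ℕ,+). -/
open FirstOrder

/-- A language is regular if it is recognized by a DFA with finitely many states. -/
def RegularLang {α : Type} (L : Set (List α)) : Prop :=
  ∃ (Q : Type) (_ : Fintype Q) (M : DFA α Q), M.accepts = L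

/-- The first-order language with a single binary function symbol. -/
def plusLang : FirstOrder.Language where
  Functions := fun n => match n with | 2 => Unit | _ => Empty
  Relations := fun _ => Empty

instance : plusLang.Structure ℕ where
  funMap {n} f x :=
    match n, f with
    | 2, _ => x 0 + x 1
  RelMap {n} r _ := nomatch r

/-- A set `S ⊆ ℕ^α` is definable in `(ℕ,+)` (parameters allowed). -/
def DefinableNatAdd {α : Type} (S : Set (α → ℕ)) : Prop :=
  Set.Definable (Set.univ : Set ℕ) plusLang S

/-- `t`-fold concatenation of a word with itself. -/
def wpow {α : Type} (σ : List α) (t : ℕ) : List α := (List.replicate t σ).flatten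

namespace Stmt0Aux

open FirstOrder Language

abbrev U : Set ℕ := Set.univ

def natTerm {γ : Type} (c : ℕ) : plusLang[[↥U]].Term γ := (plusLang.con ⟨c, trivial⟩).term

def addTerm {γ : Type} (a b : plusLang[[↥U]].Term γ) : plusLang[[↥U]].Term γ :=
  Term.func (l := 2) (Sum.inl (Unit.unit : plusLang.Functions 2)) ![a, b]

@[simp] lemma realize_natTerm {γ : Type} (c : ℕ) (v : γ → ℕ) :
    (natTerm c).realize v = c := by
  simp [natTerm]

@[simp] lemma realize_addTerm {γ : Type} (a b : plusLang[[↥U]].Term γ) (v : γ → ℕ) :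
    (addTerm a b).realize v = a.realize v + b.realize v := by
  simp only [addTerm, Term.realize]
  rfl

/-- A term realizing `c + p * x`. -/
def affTerm {γ : Type} (c p : ℕ) (x : plusLang[[↥U]].Term γ) : plusLang[[↥U]].Term γ :=
  Nat.rec (natTerm c) (fun _ ih => addTerm ih x) p

@[simp] lemma realize_affTerm {γ : Type} (c p : ℕ) (x : plusLang[[↥U]].Term γ) (v : γ → ℕ) :
    (affTerm c p x).realize v = c + p * x.realize v := by
  induction p with
  | zero => simp [affTerm]
  | succ p ih =>
    show (addTerm (affTerm c p x) x).realize v = _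
    rw [realize_addTerm, ih]
    ring

lemma def_eq_const {α : Type} (i : α) (c : ℕ) :
    DefinableNatAdd {t : α → ℕ | t i = c} := by
  refine ⟨Term.equal (Term.var i) (natTerm c), ?_⟩
  ext t
  simp only [Set.mem_setOf_eq, Formula.realize_equal, Term.realize_var, realize_natTerm]

lemma def_arith {α : Type} (i : α) (c p : ℕ) :
    DefinableNatAdd {t : α → ℕ | ∃ s, t i = c + p * s} := by
  refine ⟨BoundedFormula.ex
    (Term.bdEqual (Term.var (Sum.inl i))
      (affTerm c p (Term.var (Sum.inr (0 : Fin 1))))), ?_⟩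
  ext t
  simp only [Set.mem_setOf_eq, Formula.Realize, BoundedFormula.realize_ex,
    BoundedFormula.realize_bdEqual, Term.realize_var, realize_affTerm, Sum.elim_inl, Sum.elim_inr]
  constructor
  · rintro ⟨s, hs⟩
    exact ⟨s, by simpa [Fin.snoc] using hs⟩
  · rintro ⟨a, ha⟩
    exact ⟨a, by simpa [Fin.snoc] using ha⟩

/-- Membership of a coordinate in an eventually periodic subset of `ℕ` is definable. -/
lemma def_mem_evp {α : Type} (i : α) (T : Set ℕ) (N p : ℕ) (hp : 0 < p)
    (hT : ∀ m, N ≤ m → (m + p ∈ T ↔ m ∈ T)) :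
    DefinableNatAdd {t : α → ℕ | t i ∈ T} := by
  classical
  have key : ∀ j, N ≤ j → ∀ s, (j + p * s ∈ T ↔ j ∈ T) := by
    intro j hj s
    induction s with
    | zero => simp
    | succ s ih =>
      have h1 : j + p * (s + 1) = (j + p * s) + p := by ring
      rw [h1, hT (j + p * s) (le_trans hj (Nat.le_add_right _ _)), ih]
  have hset : {t : α → ℕ | t i ∈ T} =
      (⋃ c ∈ Finset.range (N + p),
        if c ∈ T then {t : α → ℕ | t i = c} else ∅) ∪
      (⋃ j ∈ Finset.Ico N (N + p),
        if j ∈ T then {t : α → ℕ | ∃ s, t i = j + p * s} else ∅) := by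
    ext t
    simp only [Set.mem_setOf_eq, Set.mem_union, Set.mem_iUnion, Finset.mem_range,
      Finset.mem_Ico, exists_prop]
    constructor
    · intro ht
      by_cases hlt : t i < N + p
      · exact Or.inl ⟨t i, hlt, by simp [ht]⟩
      · push_neg at hlt
        refine Or.inr ⟨N + (t i - N) % p, ⟨Nat.le_add_right _ _, by
          have := Nat.mod_lt (t i - N) hp; omega⟩, ?_⟩
        have hmod : N + (t i - N) % p + p * ((t i - N) / p) = t i := by
          have := Nat.mod_add_div (t i - N) p
          omega
        have hmem : N + (t i - N) % p ∈ T := by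
          rw [← (key _ (Nat.le_add_right _ _) ((t i - N) / p)), hmod]; exact ht
        simp only [hmem, if_true, Set.mem_setOf_eq]
        exact ⟨(t i - N) / p, hmod.symm⟩
    · rintro (⟨c, _, hc⟩ | ⟨j, ⟨hjN, _⟩, hj⟩)
      · by_cases hcT : c ∈ T
        · simp only [hcT, if_true, Set.mem_setOf_eq] at hc; rw [hc]; exact hcT
        · simp [hcT] at hc
      · by_cases hjT : j ∈ T
        · simp only [hjT, if_true, Set.mem_setOf_eq] at hj
          obtain ⟨s, hs⟩ := hj
          rw [hs, key j hjN s]; exact hjT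
        · simp [hjT] at hj
  rw [hset]
  refine Set.Definable.union ?_ ?_
  · refine Set.definable_biUnion_finset (fun c => ?_) _
    split
    · exact def_eq_const i c
    · exact Set.definable_empty
  · refine Set.definable_biUnion_finset (fun j => ?_) _
    split
    · exact def_arith i j p
    · exact Set.definable_empty

/-- Iterates of a self-map of a finite type hit a given point eventually periodically. -/
lemma iterate_evp {Q : Type} [Fintype Q] (g : Q → Q) (a : Q) :
    ∃ N p, 0 < p ∧ ∀ m, N ≤ m → g^[m + p] a = g^[m] a := by
  obtain ⟨i, j, hne, heq⟩ :=
    Finite.exists_ne_map_eq_of_infinite (fun m : ℕ => g^[m] a)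
  rcases hne.lt_or_gt with hij | hij
  · refine ⟨i, j - i, by omega, fun m hm => ?_⟩
    obtain ⟨k, rfl⟩ := Nat.exists_eq_add_of_le hm
    have h1 : i + k + (j - i) = k + j := by omega
    have h2 : i + k = k + i := by omega
    rw [h1, h2, Function.iterate_add_apply, Function.iterate_add_apply, ← heq]
  · refine ⟨j, i - j, by omega, fun m hm => ?_⟩
    obtain ⟨k, rfl⟩ := Nat.exists_eq_add_of_le hm
    have h1 : j + k + (i - j) = k + i := by omega
    have h2 : j + k = k + j := by omega
    rw [h1, h2, Function.iterate_add_apply, Function.iterate_add_apply, heq]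

lemma evalFrom_wpow {Λ Q : Type} (M : DFA Λ Q) (σ : List Λ) (t : ℕ) (s : Q) :
    M.evalFrom s (wpow σ t) = (fun q => M.evalFrom q σ)^[t] s := by
  induction t generalizing s with
  | zero => simp [wpow, DFA.evalFrom]
  | succ t ih =>
    have h1 : wpow σ (t + 1) = σ ++ wpow σ t := by
      simp [wpow, List.replicate_succ]
    rw [h1, Function.iterate_succ_apply]
    have h2 : M.evalFrom s (σ ++ wpow σ t)
        = M.evalFrom (M.evalFrom s σ) (wpow σ t) := by
      simp [DFA.evalFrom, List.foldl_append]
    rw [h2]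
    exact ih _

/-- Main inductive lemma. -/
lemma main {Λ Q : Type} [Fintype Q] (M : DFA Λ Q) :
    ∀ (n : ℕ) (σ : Fin n → List Λ) (s : Q) (P : Set Q),
    DefinableNatAdd
      {t : Fin n → ℕ | M.evalFrom s ((List.ofFn fun i => wpow (σ i) (t i)).flatten) ∈ P} := by
  classical
  intro n
  induction n with
  | zero =>
    intro σ s P
    by_cases hs : s ∈ P
    · unfold DefinableNatAdd
      convert Set.definable_univ (M := ℕ) (A := U) (L := plusLang) (α := Fin 0)
      ext t
      simp [DFA.evalFrom, hs]
    · unfold DefinableNatAdd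
      convert Set.definable_empty (M := ℕ) (A := U) (L := plusLang) (α := Fin 0)
      ext t
      simp [DFA.evalFrom, hs]
  | succ n ih =>
    intro σ s P
    have hsplit : ∀ t : Fin (n + 1) → ℕ,
        M.evalFrom s ((List.ofFn fun i => wpow (σ i) (t i)).flatten)
          = M.evalFrom ((fun q => M.evalFrom q (σ 0))^[t 0] s)
            ((List.ofFn fun i : Fin n => wpow (σ i.succ) (t i.succ)).flatten) := by
      intro t
      rw [List.ofFn_succ, List.flatten_cons]
      have h2 : M.evalFrom s (wpow (σ 0) (t 0) ++
            (List.ofFn fun i : Fin n => wpow (σ i.succ) (t i.succ)).flatten)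
          = M.evalFrom (M.evalFrom s (wpow (σ 0) (t 0)))
            ((List.ofFn fun i : Fin n => wpow (σ i.succ) (t i.succ)).flatten) := by
        simp [DFA.evalFrom, List.foldl_append]
      rw [h2, evalFrom_wpow]
    have hset : {t : Fin (n + 1) → ℕ |
        M.evalFrom s ((List.ofFn fun i => wpow (σ i) (t i)).flatten) ∈ P} =
        ⋃ q ∈ (Finset.univ : Finset Q),
          ({t : Fin (n + 1) → ℕ | (fun q => M.evalFrom q (σ 0))^[t 0] s = q} ∩
           ((fun (g : Fin (n + 1) → ℕ) => g ∘ Fin.succ) ⁻¹'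
             {u : Fin n → ℕ |
               M.evalFrom q ((List.ofFn fun i : Fin n => wpow (σ i.succ) (u i)).flatten) ∈ P})) := by
      ext t
      simp only [Set.mem_setOf_eq, Set.mem_iUnion, Finset.mem_univ, exists_prop, true_and,
        Set.mem_inter_iff, Set.mem_preimage, Function.comp]
      constructor
      · intro ht
        refine ⟨(fun q => M.evalFrom q (σ 0))^[t 0] s, rfl, ?_⟩
        rw [hsplit t] at ht
        exact ht
      · rintro ⟨q, rfl, hq⟩
        rw [hsplit t]
        exact hq
    rw [hset]
    refine Set.definable_biUnion_finset (fun q => ?_) _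
    refine Set.Definable.inter ?_ ?_
    · obtain ⟨N, p, hp, hNp⟩ := iterate_evp (fun q => M.evalFrom q (σ 0)) s
      exact def_mem_evp 0 {m | (fun q => M.evalFrom q (σ 0))^[m] s = q} N p hp
        (fun m hm => by simp only [Set.mem_setOf_eq, hNp m hm])
    · exact Set.Definable.preimage_comp Fin.succ (ih _ q P)

end Stmt0Aux

theorem stmt0 (Λ : Type) [Fintype Λ] (L : Set (List Λ)) (hL : RegularLang L)
    (n : ℕ) (σ : Fin n → List Λ) :
    DefinableNatAdd {t : Fin n → ℕ | (List.ofFn fun i => wpow (σ i) (t i)).flatten ∈ L} := by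
  obtain ⟨Q, fQ, M, hM⟩ := hL
  have : {t : Fin n → ℕ | (List.ofFn fun i => wpow (σ i) (t i)).flatten ∈ L} =
      {t : Fin n → ℕ |
        M.evalFrom M.start ((List.ofFn fun i => wpow (σ i) (t i)).flatten) ∈ M.accept} := by
    ext t
    rw [← hM]
    rfl
  rw [this]
  exact Stmt0Aux.main M n σ M.start M.accept
end

section
/- Fix an integer d ≥ 2, and let Σ = {0,1,…,d−1} and −Σ = {0,−1,…,−(d−1)}. Then: (i) for all a, b ∈ ℤ and every integer δ ≥ 1 there exist words u, v, w, either all three over Σ or all three over −Σ, such that the symmetric difference of b + C(a;δ) and {[u v^n w] : n ∈ ℕ} is finite; and (ii) for all words u, v, w either all three over Σ or all three over −Σ, there exist b, a ∈ ℤ and an integer δ ≥ 1 such that the symmetric difference of {[u v^n w] : n ∈ ℕ} and b + C(a;δ) is finite. -/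
/-- Evaluation of a word over ℤ base `d`, least significant digit first. -/
def evalZ (d : ℤ) : List ℤ → ℤ
  | [] => 0
  | k :: σ => k + d * evalZ d σ

/-- `C(a;δ) = {a + d^δ·a + d^{2δ}·a + ⋯ + d^{nδ}·a : n ∈ ℕ}`. -/
def Cset (d a : ℤ) (δ : ℕ) : Set ℤ :=
  {x | ∃ n : ℕ, x = ∑ i ∈ Finset.range (n + 1), d ^ (i * δ) * a}

/-- The word `u` is over the alphabet `Σ = {0,…,d−1}`. -/
def overSigma (d : ℤ) (u : List ℤ) : Prop := ∀ k ∈ u, 0 ≤ k ∧ k < d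

/-- The word `u` is over the alphabet `−Σ = {0,−1,…,−(d−1)}`. -/
def overNegSigma (d : ℤ) (u : List ℤ) : Prop := ∀ k ∈ u, -d < k ∧ k ≤ 0

/-- The translate `b + C(a;δ)`. -/
def transCset (d b a : ℤ) (δ : ℕ) : Set ℤ := {x | ∃ c ∈ Cset d a δ, x = b + c}

/-- The set `{[u vⁿ w] : n ∈ ℕ}`. -/
def uvwSet (d : ℤ) (u v w : List ℤ) : Set ℤ :=
  {x | ∃ n : ℕ, x = evalZ d (u ++ wpow v n ++ w)}

lemma evalZ_append (d : ℤ) (u w : List ℤ) :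
    evalZ d (u ++ w) = evalZ d u + d ^ u.length * evalZ d w := by
  induction u with
  | nil => simp [evalZ]
  | cons k u ih => simp [evalZ, ih, pow_succ]; ring

lemma wpow_zero {α : Type} (v : List α) : wpow v 0 = [] := rfl

lemma wpow_succ {α : Type} (v : List α) (n : ℕ) : wpow v (n+1) = v ++ wpow v n := by
  simp [wpow, List.replicate_succ]

lemma wpow_nil {α : Type} (n : ℕ) : wpow ([] : List α) n = [] := by
  induction n with
  | zero => rfl
  | succ n ih => rw [wpow_succ, ih]; rfl

lemma evalZ_wpow_append (d : ℤ) (v w : List ℤ) (n : ℕ) :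
    evalZ d (wpow v n ++ w) =
      evalZ d v * ∑ i ∈ Finset.range n, (d ^ v.length) ^ i
        + (d ^ v.length) ^ n * evalZ d w := by
  induction n with
  | zero => simp [wpow_zero]
  | succ n ih =>
    rw [wpow_succ, List.append_assoc, evalZ_append, ih, geom_sum_succ]
    ring

lemma evalZ_uvw (d : ℤ) (u v w : List ℤ) (n : ℕ) :
    evalZ d (u ++ wpow v n ++ w) =
      evalZ d u + d ^ u.length *
        (evalZ d v * ∑ i ∈ Finset.range n, (d ^ v.length) ^ i
          + (d ^ v.length) ^ n * evalZ d w) := by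
  rw [List.append_assoc, evalZ_append, evalZ_wpow_append]

lemma evalZ_map_natCast (D : ℕ) (l : List ℕ) :
    evalZ (D : ℤ) (l.map Int.ofNat) = ((Nat.ofDigits D l : ℕ) : ℤ) := by
  induction l with
  | nil => simp [evalZ, Nat.ofDigits_nil]
  | cons k l ih =>
    rw [List.map_cons]
    show (Int.ofNat k) + (D : ℤ) * evalZ (D : ℤ) (l.map Int.ofNat) = _
    rw [ih, Nat.ofDigits_cons]
    push_cast [Int.ofNat_eq_natCast]
    ring

lemma evalZ_replicate_zero (d : ℤ) (n : ℕ) : evalZ d (List.replicate n 0) = 0 := by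
  induction n with
  | zero => rfl
  | succ n ih => simp [List.replicate_succ, evalZ, ih]

/-- digits of `m` padded with zeros to length `L`. -/

def padWord (D : ℕ) (m L : ℕ) : List ℤ :=
  (Nat.digits D m).map Int.ofNat ++ List.replicate (L - (Nat.digits D m).length) 0

lemma digits_length_le {D m L : ℕ} (hD : 1 < D) (h : m < D ^ L) :
    (Nat.digits D m).length ≤ L := by
  rcases eq_or_ne m 0 with rfl | hm
  · simp
  · rw [Nat.digits_len D m hD hm]
    exact Nat.log_lt_of_lt_pow hm h

lemma padWord_length {D m L : ℕ} (hD : 1 < D) (h : m < D ^ L) :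
    (padWord D m L).length = L := by
  have h2 := digits_length_le hD h
  rw [padWord, List.length_append, List.length_map, List.length_replicate]
  omega

lemma padWord_over {D : ℕ} (hD : 1 < D) (m L : ℕ) : overSigma (D : ℤ) (padWord D m L) := by
  intro k hk
  rcases List.mem_append.1 hk with hk | hk
  · obtain ⟨j, hj, rfl⟩ := List.mem_map.1 hk
    have := Nat.digits_lt_base hD hj
    refine ⟨Int.ofNat_nonneg j, ?_⟩
    rw [Int.ofNat_eq_natCast]
    exact_mod_cast this
  · have := List.eq_of_mem_replicate hk
    subst this
    exact ⟨le_refl 0, by exact_mod_cast Nat.zero_lt_of_lt hD⟩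

lemma padWord_eval (D : ℕ) (m L : ℕ) : evalZ (D : ℤ) (padWord D m L) = m := by
  rw [padWord, evalZ_append, evalZ_replicate_zero, evalZ_map_natCast, Nat.ofDigits_digits]
  ring

lemma evalZ_map_neg (d : ℤ) (l : List ℤ) :
    evalZ d (l.map (fun k => -k)) = - evalZ d l := by
  induction l with
  | nil => simp [evalZ]
  | cons k l ih => simp [evalZ, ih]; ring

lemma wpow_map {α β : Type} (f : α → β) (v : List α) (n : ℕ) :
    wpow (v.map f) n = (wpow v n).map f := by
  induction n with
  | zero => rfl
  | succ n ih => rw [wpow_succ, wpow_succ, ih, List.map_append]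

lemma pow_mul_delta (d : ℤ) (δ i : ℕ) : d ^ (i * δ) = (d ^ δ) ^ i := by
  rw [mul_comm, pow_mul]

lemma transCset_mem (d b a : ℤ) (δ : ℕ) (x : ℤ) :
    x ∈ transCset d b a δ ↔ ∃ n : ℕ, x = b + (∑ i ∈ Finset.range (n + 1), (d ^ δ) ^ i) * a := by
  have hsum : ∀ n : ℕ, ∑ i ∈ Finset.range (n + 1), d ^ (i * δ) * a
      = (∑ i ∈ Finset.range (n + 1), (d ^ δ) ^ i) * a := by
    intro n
    rw [Finset.sum_mul]
    apply Finset.sum_congr rfl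
    intro i _
    rw [pow_mul_delta]
  constructor
  · rintro ⟨c, ⟨n, rfl⟩, rfl⟩
    exact ⟨n, by rw [hsum]⟩
  · rintro ⟨n, rfl⟩
    exact ⟨∑ i ∈ Finset.range (n + 1), d ^ (i * δ) * a, ⟨n, rfl⟩, by rw [hsum]⟩

/-- The key algebraic identity for the positive construction. -/

lemma key_alg (x q r b : ℤ) (N n : ℕ) :
    (b - q + r * ∑ i ∈ Finset.range (N + 1), x ^ i)
      + x ^ (N + 1) * (r * ∑ i ∈ Finset.range n, x ^ i + x ^ n * q)
    = b + (∑ i ∈ Finset.range (N + n + 1), x ^ i) * (q * (x - 1) + r) := by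
  have h1 : ∑ i ∈ Finset.range (N + n + 1), x ^ i
      = ∑ i ∈ Finset.range (N + 1), x ^ i + x ^ (N + 1) * ∑ i ∈ Finset.range n, x ^ i := by
    have h := Finset.sum_range_add (fun i => x ^ i) (N + 1) n
    have : N + n + 1 = N + 1 + n := by omega
    rw [this, h, Finset.mul_sum]
    congr 1
    apply Finset.sum_congr rfl
    intro i _
    rw [pow_add]
  have h2 : (∑ i ∈ Finset.range (N + n + 1), x ^ i) * (x - 1) = x ^ (N + n + 1) - 1 :=
    geom_sum_mul x (N + n + 1)
  have h3 : x ^ (N + 1) * x ^ n = x ^ (N + n + 1) := by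
    rw [← pow_add]; congr 1; omega
  linear_combination -r * h1 - q * h2 - q * h3

lemma construct_pos (d : ℤ) (hd : 2 ≤ d) (b a q r : ℤ) (δ N : ℕ) (hδ : 1 ≤ δ)
    (hq : 0 ≤ q) (hr : 0 ≤ r) (hrx : r < d ^ δ)
    (ha : a = q * (d ^ δ - 1) + r)
    (hE0 : 0 ≤ b - q + r * ∑ i ∈ Finset.range (N + 1), (d ^ δ) ^ i)
    (hE1 : b - q + r * ∑ i ∈ Finset.range (N + 1), (d ^ δ) ^ i < (d ^ δ) ^ (N + 1)) :
    ∃ u v w : List ℤ, overSigma d u ∧ overSigma d v ∧ overSigma d w ∧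
      ((transCset d b a δ \ uvwSet d u v w) ∪ (uvwSet d u v w \ transCset d b a δ)).Finite := by
  set E : ℤ := b - q + r * ∑ i ∈ Finset.range (N + 1), (d ^ δ) ^ i with hE
  set D : ℕ := d.toNat with hDdef
  have hDd : (D : ℤ) = d := Int.toNat_of_nonneg (by linarith)
  have hD : 1 < D := by
    have : (1 : ℤ) < (D : ℤ) := by rw [hDd]; linarith
    exact_mod_cast this
  -- the words
  set u : List ℤ := padWord D E.toNat ((N + 1) * δ) with hu
  set v : List ℤ := padWord D r.toNat δ with hv
  set w : List ℤ := padWord D q.toNat 0 with hw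
  have hpowcast : ∀ L : ℕ, ((D ^ L : ℕ) : ℤ) = d ^ L := by
    intro L; push_cast; rw [hDd]
  have hELt : E.toNat < D ^ ((N + 1) * δ) := by
    have h1 : (E.toNat : ℤ) = E := Int.toNat_of_nonneg hE0
    have h2 : (E.toNat : ℤ) < ((D ^ ((N + 1) * δ) : ℕ) : ℤ) := by
      rw [h1, hpowcast, mul_comm (N + 1) δ, pow_mul]
      exact hE1
    exact_mod_cast h2
  have hrLt : r.toNat < D ^ δ := by
    have h1 : (r.toNat : ℤ) = r := Int.toNat_of_nonneg hr
    have h2 : (r.toNat : ℤ) < ((D ^ δ : ℕ) : ℤ) := by rw [h1, hpowcast]; exact hrx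
    exact_mod_cast h2
  have hulen : u.length = (N + 1) * δ := padWord_length hD hELt
  have hvlen : v.length = δ := padWord_length hD hrLt
  have hueval : evalZ d u = E := by
    rw [hu, ← hDd, padWord_eval, Int.toNat_of_nonneg hE0]
  have hveval : evalZ d v = r := by
    rw [hv, ← hDd, padWord_eval, Int.toNat_of_nonneg hr]
  have hweval : evalZ d w = q := by
    rw [hw, ← hDd, padWord_eval, Int.toNat_of_nonneg hq]
  have husig : overSigma d u := by rw [← hDd]; exact padWord_over hD _ _
  have hvsig : overSigma d v := by rw [← hDd]; exact padWord_over hD _ _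
  have hwsig : overSigma d w := by rw [← hDd]; exact padWord_over hD _ _
  -- key evaluation
  have hkey : ∀ n : ℕ, evalZ d (u ++ wpow v n ++ w)
      = b + (∑ i ∈ Finset.range (N + n + 1), (d ^ δ) ^ i) * a := by
    intro n
    rw [evalZ_uvw, hulen, hvlen, hueval, hveval, hweval, ha]
    rw [mul_comm (N + 1) δ, pow_mul]
    exact key_alg (d ^ δ) q r b N n
  refine ⟨u, v, w, husig, hvsig, hwsig, ?_⟩
  have hsub : (transCset d b a δ \ uvwSet d u v w) ∪ (uvwSet d u v w \ transCset d b a δ)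
      ⊆ (fun i : ℕ => b + (∑ j ∈ Finset.range (i + 1), (d ^ δ) ^ j) * a) '' (Set.Iio N) := by
    rintro x (⟨hx1, hx2⟩ | ⟨hx1, hx2⟩)
    · obtain ⟨m, rfl⟩ := (transCset_mem d b a δ x).1 hx1
      by_cases hm : m < N
      · exact ⟨m, hm, rfl⟩
      · exfalso
        apply hx2
        refine ⟨m - N, ?_⟩
        rw [hkey]
        have hmn : N + (m - N) + 1 = m + 1 := by omega
        rw [hmn]
    · exfalso
      obtain ⟨n, rfl⟩ := hx1
      apply hx2
      rw [hkey]
      exact (transCset_mem d b a δ _).2 ⟨N + n, rfl⟩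
  exact Set.Finite.subset (Set.Finite.image _ (Set.finite_Iio N)) hsub

lemma TN_facts (x : ℤ) (hx : 2 ≤ x) (N : ℕ) :
    (N : ℤ) + 1 ≤ ∑ i ∈ Finset.range (N + 1), x ^ i ∧
    (∑ i ∈ Finset.range (N + 1), x ^ i) * (x - 1) = x ^ (N + 1) - 1 ∧
    (N : ℤ) + 2 ≤ x ^ (N + 1) := by
  refine ⟨?_, geom_sum_mul x (N + 1), ?_⟩
  · calc (N : ℤ) + 1 = ∑ _i ∈ Finset.range (N + 1), (1 : ℤ) := by
          simp
      _ ≤ ∑ i ∈ Finset.range (N + 1), x ^ i :=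
          Finset.sum_le_sum (fun i _ => one_le_pow₀ (by linarith))
  · have h1 : ((N + 1 : ℕ) : ℤ) < ((2 ^ (N + 1) : ℕ) : ℤ) := by
      exact_mod_cast Nat.lt_two_pow_self (n := N + 1)
    have h2 : (2 : ℤ) ^ (N + 1) ≤ x ^ (N + 1) := pow_le_pow_left₀ (by norm_num) hx _
    push_cast at h1
    linarith

lemma part1_pos (d : ℤ) (hd : 2 ≤ d) (a b : ℤ) (ha : 1 ≤ a) (δ : ℕ) (hδ : 1 ≤ δ) :
    ∃ u v w : List ℤ, overSigma d u ∧ overSigma d v ∧ overSigma d w ∧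
      ((transCset d b a δ \ uvwSet d u v w) ∪ (uvwSet d u v w \ transCset d b a δ)).Finite := by
  set x : ℤ := d ^ δ with hxdef
  have hx : 2 ≤ x := le_trans hd (le_self_pow₀ (by linarith) (by omega))
  have hx1 : (0 : ℤ) < x - 1 := by linarith
  set q : ℤ := a / (x - 1) with hqdef
  set r : ℤ := a % (x - 1) with hrdef
  have hqr : a = q * (x - 1) + r := by
    have := Int.mul_ediv_add_emod a (x - 1)
    linarith
  have hr0 : 0 ≤ r := Int.emod_nonneg a (by linarith)
  have hr1 : r < x - 1 := Int.emod_lt_of_pos a hx1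
  have hq0 : 0 ≤ q := Int.ediv_nonneg (by linarith) (by linarith)
  rcases eq_or_lt_of_le hr0 with hr | hr
  · -- r = 0
    rcases le_or_gt q b with hb | hb
    · -- case b ≥ q
      set N : ℕ := (b - q).toNat with hNdef
      have hN : (N : ℤ) = b - q := Int.toNat_of_nonneg (by linarith)
      obtain ⟨hA, hB, hC⟩ := TN_facts x hx N
      refine construct_pos d hd b a q r δ N hδ hq0 hr0 (by linarith) hqr ?_ ?_
      · rw [← hr]; linarith
      · rw [← hr]; linarith
    · -- case b < q
      have hq1 : 1 ≤ q := by
        rcases eq_or_lt_of_le hq0 with h | h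
        · exfalso; rw [← hqr.symm, ← h, ← hr] at ha; linarith
        · linarith
      set N : ℕ := (q - b).toNat with hNdef
      have hN : (N : ℤ) = q - b := Int.toNat_of_nonneg (by linarith)
      obtain ⟨hA, hB, hC⟩ := TN_facts x hx N
      refine construct_pos d hd b a (q - 1) (x - 1) δ N hδ (by linarith) (by linarith)
        (by linarith) (by rw [hqr, ← hr]; ring) ?_ ?_
      · nlinarith
      · nlinarith
  · -- r ≥ 1
    set N : ℕ := (b - q).toNat ⊔ (q - b).toNat with hNdef
    have hN1 : b - q ≤ (N : ℤ) := by
      calc b - q ≤ ((b - q).toNat : ℤ) := Int.self_le_toNat _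
        _ ≤ (N : ℤ) := by exact_mod_cast Nat.le_max_left _ _
    have hN2 : q - b ≤ (N : ℤ) := by
      calc q - b ≤ ((q - b).toNat : ℤ) := Int.self_le_toNat _
        _ ≤ (N : ℤ) := by exact_mod_cast Nat.le_max_right _ _
    obtain ⟨hA, hB, hC⟩ := TN_facts x hx N
    have hT0 : (0 : ℤ) ≤ ∑ i ∈ Finset.range (N + 1), x ^ i := by linarith
    refine construct_pos d hd b a q r δ N hδ hq0 hr0 (by linarith) hqr ?_ ?_
    · nlinarith
    · have hr2 : r ≤ x - 2 := by linarith
      nlinarith [mul_le_mul_of_nonneg_right hr2 hT0]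

lemma uvwSet_map_neg (d : ℤ) (u v w : List ℤ) :
    uvwSet d (u.map (fun k => -k)) (v.map (fun k => -k)) (w.map (fun k => -k))
      = Neg.neg '' uvwSet d u v w := by
  ext t
  constructor
  · rintro ⟨n, rfl⟩
    refine ⟨evalZ d (u ++ wpow v n ++ w), ⟨n, rfl⟩, ?_⟩
    rw [wpow_map, ← List.map_append, ← List.map_append, evalZ_map_neg]
  · rintro ⟨s, ⟨n, rfl⟩, rfl⟩
    refine ⟨n, ?_⟩
    rw [wpow_map, ← List.map_append, ← List.map_append, evalZ_map_neg]

lemma transCset_neg (d : ℤ) (b a : ℤ) (δ : ℕ) :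
    transCset d (-b) (-a) δ = Neg.neg '' transCset d b a δ := by
  ext t
  rw [transCset_mem]
  constructor
  · rintro ⟨n, rfl⟩
    exact ⟨b + (∑ i ∈ Finset.range (n + 1), (d ^ δ) ^ i) * a,
      (transCset_mem d b a δ _).2 ⟨n, rfl⟩, by ring⟩
  · rintro ⟨s, hs, rfl⟩
    obtain ⟨n, rfl⟩ := (transCset_mem d b a δ s).1 hs
    exact ⟨n, by ring⟩

lemma oversigma_neg (d : ℤ) (u : List ℤ) (h : overSigma d u) :
    overNegSigma d (u.map (fun k => -k)) := by
  intro k hk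
  obtain ⟨j, hj, rfl⟩ := List.mem_map.1 hk
  obtain ⟨h1, h2⟩ := h j hj
  exact ⟨by linarith, by linarith⟩

lemma part1_negcase (d : ℤ) (b a : ℤ) (δ : ℕ)
    (h : ∃ u v w : List ℤ, overSigma d u ∧ overSigma d v ∧ overSigma d w ∧
      ((transCset d (-b) (-a) δ \ uvwSet d u v w)
        ∪ (uvwSet d u v w \ transCset d (-b) (-a) δ)).Finite) :
    ∃ u v w : List ℤ, overNegSigma d u ∧ overNegSigma d v ∧ overNegSigma d w ∧
      ((transCset d b a δ \ uvwSet d u v w)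
        ∪ (uvwSet d u v w \ transCset d b a δ)).Finite := by
  obtain ⟨u, v, w, hu, hv, hw, hfin⟩ := h
  refine ⟨u.map (fun k => -k), v.map (fun k => -k), w.map (fun k => -k),
    oversigma_neg d u hu, oversigma_neg d v hv, oversigma_neg d w hw, ?_⟩
  have h1 := transCset_neg d (-b) (-a) δ
  rw [neg_neg, neg_neg] at h1
  rw [h1, uvwSet_map_neg, ← Set.image_diff neg_injective, ← Set.image_diff neg_injective,
    ← Set.image_union]
  exact Set.Finite.image _ hfin

lemma transCset_zero (d b : ℤ) (δ : ℕ) : transCset d b 0 δ = {b} := by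
  ext t
  rw [transCset_mem]
  simp

lemma overSigma_nil (d : ℤ) : overSigma d [] := by intro k hk; cases hk

lemma part1_zero (d : ℤ) (hd : 2 ≤ d) (b : ℤ) (hb : 0 ≤ b) (δ : ℕ) :
    ∃ u v w : List ℤ, overSigma d u ∧ overSigma d v ∧ overSigma d w ∧
      ((transCset d b 0 δ \ uvwSet d u v w) ∪ (uvwSet d u v w \ transCset d b 0 δ)).Finite := by
  set D : ℕ := d.toNat with hDdef
  have hDd : (D : ℤ) = d := Int.toNat_of_nonneg (by linarith)
  have hD : 1 < D := by
    have : (1 : ℤ) < (D : ℤ) := by rw [hDd]; linarith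
    exact_mod_cast this
  refine ⟨padWord D b.toNat 0, [], [], by rw [← hDd]; exact padWord_over hD _ _,
    overSigma_nil d, overSigma_nil d, ?_⟩
  have huvw : uvwSet d (padWord D b.toNat 0) [] [] = {b} := by
    ext t
    constructor
    · rintro ⟨n, rfl⟩
      rw [wpow_nil, List.append_nil, List.append_nil, ← hDd, padWord_eval,
        Int.toNat_of_nonneg hb]
      rfl
    · rintro rfl
      refine ⟨0, ?_⟩
      rw [wpow_nil, List.append_nil, List.append_nil, ← hDd, padWord_eval,
        Int.toNat_of_nonneg hb]
  rw [huvw, transCset_zero]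
  simp

lemma part2 (d : ℤ) (hd : 2 ≤ d) (u v w : List ℤ) :
    ∃ b a : ℤ, ∃ δ : ℕ, 1 ≤ δ ∧
      ((uvwSet d u v w \ transCset d b a δ) ∪ (transCset d b a δ \ uvwSet d u v w)).Finite := by
  rcases eq_or_ne v [] with rfl | hv
  · refine ⟨evalZ d (u ++ w), 0, 1, le_refl 1, ?_⟩
    have huvw : uvwSet d u [] w = {evalZ d (u ++ w)} := by
      ext t
      constructor
      · rintro ⟨n, rfl⟩
        rw [wpow_nil, List.append_nil]
        rfl
      · rintro rfl
        exact ⟨0, by rw [wpow_nil, List.append_nil]⟩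
    rw [huvw, transCset_zero]
    simp
  · have hδ : 1 ≤ v.length := List.length_pos_iff.2 hv
    set L : ℕ := u.length with hL
    set x : ℤ := d ^ v.length with hx
    set V : ℤ := evalZ d v with hV
    set W : ℤ := evalZ d w with hW
    set a : ℤ := d ^ L * (V + W * (x - 1)) with ha
    set b : ℤ := evalZ d (u ++ wpow v 1 ++ w) - a with hb
    have hkey : ∀ n : ℕ,
        b + (∑ i ∈ Finset.range (n + 1), x ^ i) * a = evalZ d (u ++ wpow v (n + 1) ++ w) := by
      intro n
      rw [hb, evalZ_uvw, evalZ_uvw]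
      have h1 : ∑ i ∈ Finset.range 1, x ^ i = 1 := by simp
      have h2 : (∑ i ∈ Finset.range (n + 1), x ^ i) * (x - 1) = x ^ (n + 1) - 1 :=
        geom_sum_mul x (n + 1)
      rw [ha]
      linear_combination (d ^ L * V) * h1 + (d ^ L * W) * h2
    have hsub : (uvwSet d u v w \ transCset d b a v.length)
        ∪ (transCset d b a v.length \ uvwSet d u v w)
        ⊆ {evalZ d (u ++ wpow v 0 ++ w)} := by
      rintro t (⟨⟨n, rfl⟩, ht⟩ | ⟨ht1, ht2⟩)
      · cases n with
        | zero => rfl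
        | succ m =>
          exfalso
          apply ht
          exact (transCset_mem d b a v.length _).2 ⟨m, by rw [← hx]; exact (hkey m).symm⟩
      · exfalso
        obtain ⟨n, rfl⟩ := (transCset_mem d b a v.length _).1 ht1
        exact ht2 ⟨n + 1, by rw [← hx] at ht1 ⊢; exact (hkey n)⟩
    exact ⟨b, a, v.length, hδ, Set.Finite.subset (Set.finite_singleton _) hsub⟩

theorem stmt3 (d : ℤ) (hd : 2 ≤ d) :
    (∀ a b : ℤ, ∀ δ : ℕ, 1 ≤ δ → ∃ u v w : List ℤ,
      ((overSigma d u ∧ overSigma d v ∧ overSigma d w) ∨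
        (overNegSigma d u ∧ overNegSigma d v ∧ overNegSigma d w)) ∧
      ((transCset d b a δ \ uvwSet d u v w) ∪ (uvwSet d u v w \ transCset d b a δ)).Finite) ∧
    (∀ u v w : List ℤ,
      ((overSigma d u ∧ overSigma d v ∧ overSigma d w) ∨
        (overNegSigma d u ∧ overNegSigma d v ∧ overNegSigma d w)) →
      ∃ b a : ℤ, ∃ δ : ℕ, 1 ≤ δ ∧
        ((uvwSet d u v w \ transCset d b a δ) ∪ (transCset d b a δ \ uvwSet d u v w)).Finite) := by
  constructor
  · intro a b δ hδ
    rcases lt_trichotomy a 0 with hlt | rfl | hgt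
    · obtain ⟨u, v, w, h1, h2, h3, h4⟩ :=
        part1_negcase d b a δ (part1_pos d hd (-a) (-b) (by linarith) δ hδ)
      exact ⟨u, v, w, Or.inr ⟨h1, h2, h3⟩, h4⟩
    · rcases le_or_gt 0 b with hb | hb
      · obtain ⟨u, v, w, h1, h2, h3, h4⟩ := part1_zero d hd b hb δ
        exact ⟨u, v, w, Or.inl ⟨h1, h2, h3⟩, h4⟩
      · obtain ⟨u, v, w, h1, h2, h3, h4⟩ :=
          part1_negcase d b 0 δ (by simpa using part1_zero d hd (-b) (by linarith) δ)
        exact ⟨u, v, w, Or.inr ⟨h1, h2, h3⟩, h4⟩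
    · obtain ⟨u, v, w, h1, h2, h3, h4⟩ := part1_pos d hd a b (by linarith) δ hδ
      exact ⟨u, v, w, Or.inl ⟨h1, h2, h3⟩, h4⟩
  · intro u v w _
    exact part2 d hd u v w
end

section
/- Fix integers d ≥ 2 and m ≥ 1. Every d-sparse set A ⊆ ℤ^m can be written as a finite union of sets of the form α + {[σ₁^{e₁}] + [σ₂^{e₂}] + ⋯ + [σₙ^{eₙ}] : e₁ ≤ e₂ ≤ ⋯ ≤ eₙ, e_i ∈ ℕ}, where α ∈ ℤ^m and σ₁, …, σₙ are words over ℤ^m all of the same length. -/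
/-- A language is sparse if it is regular and the number of its words of length at most `k`
is bounded by `C·(k^p + 1)`. -/
def SparseLang {α : Type} (L : Set (List α)) : Prop :=
  RegularLang L ∧ ∃ C p : ℕ, ∀ k : ℕ,
    {σ ∈ L | σ.length ≤ k}.Finite ∧ {σ ∈ L | σ.length ≤ k}.ncard ≤ C * (k ^ p + 1)

/-- Coordinatewise evaluation of a word over `ℤ^m` base `d`. -/
def evalVec (d : ℤ) {m : ℕ} (σ : List (Fin m → ℤ)) : Fin m → ℤ :=
  fun i => evalZ d (σ.map fun v => v i)

/-- The canonical base-`d` representation of an integer (least significant digit first,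
no trailing zeroes; digits of a negative integer are negated). -/
def canonRep (d : ℕ) (a : ℤ) : List ℤ :=
  if 0 ≤ a then (Nat.digits d a.toNat).map fun k => (k : ℤ)
  else (Nat.digits d (-a).toNat).map fun k => -(k : ℤ)

/-- The canonical base-`d` representation of a tuple in `ℤ^m`: componentwise canonical
representations padded with trailing zeroes to a common length. -/
def canonRepVec (d : ℕ) {m : ℕ} (a : Fin m → ℤ) : List (Fin m → ℤ) :=
  List.ofFn fun j : Fin (Finset.univ.sup fun i => (canonRep d (a i)).length) =>
    fun i => (canonRep d (a i)).getD (j : ℕ) 0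

/-- A set `A ⊆ ℤ^m` is `d`-sparse if its language of canonical representations is sparse. -/
def SparseVec (d : ℕ) {m : ℕ} (A : Set (Fin m → ℤ)) : Prop :=
  SparseLang (canonRepVec d '' A)


namespace Sparse5

variable {m : ℕ}

@[simp] lemma evalZ_nil (d : ℤ) : evalZ d [] = 0 := rfl
@[simp] lemma evalZ_cons (d k : ℤ) (σ : List ℤ) : evalZ d (k :: σ) = k + d * evalZ d σ := rfl

lemma evalZ_append (d : ℤ) (x y : List ℤ) :
    evalZ d (x ++ y) = evalZ d x + d ^ x.length * evalZ d y := by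
  induction x with
  | nil => simp
  | cons a x ih => simp [ih, pow_succ]; ring

@[simp] lemma evalVec_nil (d : ℤ) : evalVec d ([] : List (Fin m → ℤ)) = 0 := by
  funext i; rfl

lemma evalVec_apply (d : ℤ) (σ : List (Fin m → ℤ)) (i : Fin m) :
    evalVec d σ i = evalZ d (σ.map fun v => v i) := rfl

lemma evalVec_append (d : ℤ) (x y : List (Fin m → ℤ)) :
    evalVec d (x ++ y) = evalVec d x + (d ^ x.length) • evalVec d y := by
  funext i
  simp [evalVec_apply, evalZ_append]

@[simp] lemma wpow_zero {α : Type} (σ : List α) : wpow σ 0 = [] := rfl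

@[simp] lemma wpow_succ {α : Type} (σ : List α) (t : ℕ) :
    wpow σ (t + 1) = σ ++ wpow σ t := by
  simp [wpow, List.replicate_succ]

@[simp] lemma wpow_length {α : Type} (σ : List α) (t : ℕ) :
    (wpow σ t).length = t * σ.length := by
  induction t with
  | zero => simp
  | succ t ih => simp [ih, Nat.succ_mul]; ring

lemma wpow_add {α : Type} (σ : List α) (a b : ℕ) :
    wpow σ (a + b) = wpow σ a ++ wpow σ b := by
  induction a with
  | zero => simp
  | succ a ih => rw [Nat.succ_add, wpow_succ, wpow_succ, ih, List.append_assoc]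

lemma wpow_wpow {α : Type} (σ : List α) (a b : ℕ) :
    wpow (wpow σ a) b = wpow σ (a * b) := by
  induction b with
  | zero => simp
  | succ b ih => rw [wpow_succ, ih, Nat.mul_succ, Nat.add_comm, wpow_add]

/-- geometric sum -/
def geom (x : ℤ) (t : ℕ) : ℤ := ∑ i ∈ Finset.range t, x ^ i

@[simp] lemma geom_zero (x : ℤ) : geom x 0 = 0 := by simp [geom]

lemma geom_succ (x : ℤ) (t : ℕ) : geom x (t + 1) = 1 + x * geom x t := by
  simp only [geom, Finset.sum_range_succ', Finset.mul_sum, pow_succ, pow_zero]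
  rw [add_comm]
  congr 1
  apply Finset.sum_congr rfl
  intro i _
  ring

lemma geom_succ' (x : ℤ) (t : ℕ) : geom x (t + 1) = geom x t + x ^ t := by
  simp [geom, Finset.sum_range_succ]

lemma geom_add (x : ℤ) (a b : ℕ) : geom x (a + b) = geom x b + x ^ b * geom x a := by
  induction a with
  | zero => simp
  | succ a ih =>
    have : a + 1 + b = (a + b) + 1 := by ring
    rw [this, geom_succ', ih, geom_succ', pow_add]; ring

lemma geom_mul_sub_one (x : ℤ) (t : ℕ) : geom x t * (x - 1) = x ^ t - 1 := by
  simpa [geom] using geom_sum_mul x t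

lemma evalVec_wpow (d : ℤ) (σ : List (Fin m → ℤ)) (t : ℕ) :
    evalVec d (wpow σ t) = geom (d ^ σ.length) t • evalVec d σ := by
  induction t with
  | zero => simp
  | succ t ih =>
    rw [wpow_succ, evalVec_append, ih, geom_succ]
    funext i; simp; ring


/-- pattern word: `u0 ++ v1^{e 0} ++ u1 ++ v2^{e 1} ++ ...` -/
def patWord {A : Type} : List A → List (List A × List A) → (ℕ → ℕ) → List A
  | u0, [], _ => u0
  | u0, (v, u) :: bs, e => u0 ++ (wpow v (e 0) ++ patWord u bs fun i => e (i + 1))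

@[simp] lemma patWord_nil {A : Type} (u0 : List A) (e : ℕ → ℕ) : patWord u0 [] e = u0 := rfl

lemma patWord_cons {A : Type} (u0 v u : List A) (bs : List (List A × List A)) (e : ℕ → ℕ) :
    patWord u0 ((v, u) :: bs) e = u0 ++ (wpow v (e 0) ++ patWord u bs fun i => e (i + 1)) := rfl

/-- partial sums: `PS e i = e 0 + ... + e i` -/
def PS (e : ℕ → ℕ) : ℕ → ℕ
  | 0 => e 0
  | i + 1 => PS e i + e (i + 1)

lemma PS_shift (e : ℕ → ℕ) (i : ℕ) : PS (fun j => e (j + 1)) i + e 0 = PS e (i + 1) := by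
  induction i with
  | zero => simp [PS, Nat.add_comm]
  | succ i ih =>
    show PS (fun j => e (j + 1)) i + e (i + 1 + 1) + e 0 = PS e (i + 1) + e (i + 1 + 1)
    omega

lemma PS_monotone (e : ℕ → ℕ) : Monotone (PS e) := by
  apply monotone_nat_of_le_succ
  intro i
  simp [PS]

lemma key_scalar (x c A B al : ℤ) (n : ℕ) (V : ℕ → ℤ) (f : ℕ → ℕ) (e0 : ℕ) :
    A + c * (geom x e0 * B + x ^ e0 * (al + ∑ i ∈ Finset.range n, geom x (f i) * V i))
    = (A + c * al) + geom x e0 * (c * (B + (x - 1) * al - ∑ i ∈ Finset.range n, V i))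
      + ∑ i ∈ Finset.range n, geom x (f i + e0) * (c * V i) := by
  have hx : x ^ e0 = 1 + geom x e0 * (x - 1) := by rw [geom_mul_sub_one]; ring
  have h1 : ∑ i ∈ Finset.range n, geom x (f i + e0) * (c * V i)
      = geom x e0 * (c * ∑ i ∈ Finset.range n, V i)
        + x ^ e0 * (c * ∑ i ∈ Finset.range n, geom x (f i) * V i) := by
    rw [Finset.mul_sum, Finset.mul_sum, Finset.mul_sum, Finset.mul_sum, ← Finset.sum_add_distrib]
    apply Finset.sum_congr rfl; intro i _; rw [geom_add]; ring
  rw [h1, hx]; ring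

lemma key_vec {m : ℕ} (x c : ℤ) (A B al : Fin m → ℤ) (n : ℕ) (V : ℕ → (Fin m → ℤ))
    (f : ℕ → ℕ) (e0 : ℕ) :
    A + c • (geom x e0 • B + x ^ e0 • (al + ∑ i ∈ Finset.range n, geom x (f i) • V i))
    = (A + c • al) + geom x e0 • (c • (B + (x - 1) • al - ∑ i ∈ Finset.range n, V i))
      + ∑ i ∈ Finset.range n, geom x (f i + e0) • (c • V i) := by
  funext ii
  have := key_scalar x c (A ii) (B ii) (al ii) n (fun i => V i ii) f e0
  simp only [Pi.add_apply, Pi.smul_apply, Pi.sub_apply, smul_eq_mul, Finset.sum_apply]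
  exact this

lemma getD_map_smul {m : ℕ} (c : ℤ) (l : List (Fin m → ℤ)) (i : ℕ) (h : i < l.length) :
    (l.map (fun w => c • w)).getD i 0 = c • l.getD i 0 := by
  rw [List.getD_eq_getElem _ _ (by simpa using h), List.getD_eq_getElem _ _ h]
  simp

/-- Core arithmetic lemma: the value of a pattern word, as a function of the exponents,
is an affine combination of geometric sums of the partial sums of the exponents. -/
lemma core {m : ℕ} (D : ℤ) (N : ℕ)
    (bs : List (List (Fin m → ℤ) × List (Fin m → ℤ)))
    (hlen : ∀ b ∈ bs, (Prod.fst b).length = N) (u0 : List (Fin m → ℤ)) :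
    ∃ (α : Fin m → ℤ) (Vs : List (Fin m → ℤ)), Vs.length = bs.length ∧
      ∀ e : ℕ → ℕ, evalVec D (patWord u0 bs e) =
        α + ∑ i ∈ Finset.range bs.length, geom (D ^ N) (PS e i) • Vs.getD i 0 := by
  induction bs generalizing u0 with
  | nil => exact ⟨evalVec D u0, [], rfl, by simp⟩
  | cons b bs ih =>
    obtain ⟨v, u⟩ := b
    have hv : v.length = N := hlen (v, u) (by simp)
    obtain ⟨α', Vs', hl', hid⟩ := ih (fun b hb => hlen b (by simp [hb])) u
    set x : ℤ := D ^ N with hxdef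
    set c : ℤ := D ^ u0.length with hcdef
    refine ⟨evalVec D u0 + c • α',
      (c • (evalVec D v + (x - 1) • α' - ∑ i ∈ Finset.range bs.length, Vs'.getD i 0))
        :: Vs'.map (fun w => c • w), by simp [hl'], ?_⟩
    intro e
    rw [patWord_cons, evalVec_append, evalVec_append, evalVec_wpow, hid (fun j => e (j + 1))]
    rw [hv, wpow_length, hv]
    have hpow : D ^ (e 0 * N) = x ^ (e 0) := by rw [hxdef, ← pow_mul, Nat.mul_comm]
    rw [hpow]
    -- now RHS
    have hsum : ∑ i ∈ Finset.range (bs.length + 1), geom x (PS e i) •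
          ((c • (evalVec D v + (x - 1) • α' - ∑ i ∈ Finset.range bs.length, Vs'.getD i 0))
            :: Vs'.map (fun w => c • w)).getD i 0
        = geom x (e 0) • (c • (evalVec D v + (x - 1) • α'
            - ∑ i ∈ Finset.range bs.length, Vs'.getD i 0))
          + ∑ i ∈ Finset.range bs.length,
              geom x ((PS (fun j => e (j + 1)) i) + e 0) • (c • Vs'.getD i 0) := by
      rw [Finset.sum_range_succ']
      rw [add_comm]
      congr 1
      apply Finset.sum_congr rfl
      intro i hi
      rw [Finset.mem_range] at hi
      show geom x (PS e (i + 1)) • _ = _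
      rw [← PS_shift e i]
      congr 1
      exact getD_map_smul c Vs' i (by omega)
    rw [List.length_cons, hsum, ← add_assoc]
    exact key_vec x c (evalVec D u0) (evalVec D v) α' bs.length (fun i => Vs'.getD i 0)
      (fun i => PS (fun j => e (j + 1)) i) (e 0)
/-- A primitive set in the target form, with `ℕ`-indexed data. -/
def PrimSetN {m : ℕ} (D : ℤ) (αv : Fin m → ℤ) (n : ℕ) (σ : ℕ → List (Fin m → ℤ)) :
    Set (Fin m → ℤ) :=
  {x | ∃ e : ℕ → ℕ, Monotone e ∧
    x = αv + ∑ i ∈ Finset.range n, evalVec D (wpow (σ i) (e i))}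

/-- The `Fin`-indexed primitive set (as in the statement) equals the `ℕ`-indexed one. -/
lemma primSet_eq {m : ℕ} (D : ℤ) (αv : Fin m → ℤ) (n : ℕ) (σ : ℕ → List (Fin m → ℤ)) :
    {x | ∃ e : Fin n → ℕ, Monotone e ∧
      x = αv + ∑ i : Fin n, evalVec D (wpow (σ (i : ℕ)) (e i))}
    = PrimSetN D αv n σ := by
  ext x
  constructor
  · rintro ⟨e, he, hx⟩
    refine ⟨fun i => if h : i < n then e ⟨i, h⟩ else Finset.univ.sup e, ?_, ?_⟩
    · intro a b hab
      dsimp only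
      split_ifs with h1 h2 h2
      · exact he (by exact hab)
      · exact Finset.le_sup (Finset.mem_univ _)
      · omega
      · exact le_rfl
    · rw [hx]
      congr 1
      rw [← Fin.sum_univ_eq_sum_range
        (fun i => evalVec D (wpow (σ i) (if h : i < n then e ⟨i, h⟩ else Finset.univ.sup e)))]
      apply Finset.sum_congr rfl
      intro i _
      have : (if h : (i : ℕ) < n then e ⟨(i : ℕ), h⟩ else Finset.univ.sup e) = e i := by
        simp [i.isLt]
      rw [this]
  · rintro ⟨e, he, hx⟩
    refine ⟨fun i => e i, fun a b hab => he (by exact hab), ?_⟩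
    rw [hx]
    congr 1
    rw [← Fin.sum_univ_eq_sum_range (fun i => evalVec D (wpow (σ i) (e i)))]

/-- The target form of sets: those expressible as in the conclusion of the theorem. -/
def GoodSet {m : ℕ} (D : ℤ) (A : Set (Fin m → ℤ)) : Prop :=
  ∃ (J : ℕ) (α : Fin J → (Fin m → ℤ)) (n : Fin J → ℕ) (N : Fin J → ℕ)
    (σ : (j : Fin J) → Fin (n j) → List (Fin m → ℤ)),
    (∀ j i, (σ j i).length = N j) ∧
    A = ⋃ j : Fin J, {x | ∃ e : Fin (n j) → ℕ, Monotone e ∧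
      x = α j + ∑ i : Fin (n j), evalVec D (wpow (σ j i) (e i))}

/-- `GoodSet` from `ℕ`-indexed data. -/
lemma goodSet_of_data {m : ℕ} (D : ℤ) (A : Set (Fin m → ℤ)) (J : ℕ)
    (α : Fin J → (Fin m → ℤ)) (n N : Fin J → ℕ) (σ : Fin J → ℕ → List (Fin m → ℤ))
    (hσ : ∀ j i, i < n j → (σ j i).length = N j)
    (hA : A = ⋃ j : Fin J, PrimSetN D (α j) (n j) (σ j)) : GoodSet D A := by
  refine ⟨J, α, n, N, fun j i => σ j i, fun j i => hσ j i i.isLt, ?_⟩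
  rw [hA]
  apply Set.iUnion_congr
  intro j
  exact (primSet_eq D (α j) (n j) (σ j)).symm

lemma goodSet_empty {m : ℕ} (D : ℤ) : GoodSet D (∅ : Set (Fin m → ℤ)) :=
  ⟨0, Fin.elim0, Fin.elim0, Fin.elim0, fun j => Fin.elim0 j, fun j => Fin.elim0 j, by simp⟩

/-- `GoodSet` data in `ℕ`-indexed form, extracted from a `GoodSet`. -/
lemma goodSet_data {m : ℕ} (D : ℤ) (A : Set (Fin m → ℤ)) (h : GoodSet D A) :
    ∃ (J : ℕ) (α : Fin J → (Fin m → ℤ)) (n N : Fin J → ℕ) (σ : Fin J → ℕ → List (Fin m → ℤ)),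
      (∀ j i, i < n j → (σ j i).length = N j) ∧
      A = ⋃ j : Fin J, PrimSetN D (α j) (n j) (σ j) := by
  obtain ⟨J, α, n, N, σ, hσ, hA⟩ := h
  refine ⟨J, α, n, N, fun j i => if h : i < n j then σ j ⟨i, h⟩ else [], ?_, ?_⟩
  · intro j i hi
    simp only [hi, dif_pos]
    exact hσ j ⟨i, hi⟩
  · rw [hA]
    apply Set.iUnion_congr
    intro j
    rw [← primSet_eq]
    have hs : ∀ i : Fin (n j),
        (if h : (i : ℕ) < n j then σ j ⟨(i : ℕ), h⟩ else []) = σ j i := by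
      intro i; simp [i.isLt]
    simp only [hs]

lemma goodSet_union {m : ℕ} (D : ℤ) (A B : Set (Fin m → ℤ))
    (hA : GoodSet D A) (hB : GoodSet D B) : GoodSet D (A ∪ B) := by
  obtain ⟨J1, α1, n1, N1, σ1, hσ1, hA1⟩ := goodSet_data D A hA
  obtain ⟨J2, α2, n2, N2, σ2, hσ2, hA2⟩ := goodSet_data D B hB
  apply goodSet_of_data D _ (J1 + J2) (Fin.addCases α1 α2) (Fin.addCases n1 n2)
    (Fin.addCases N1 N2) (Fin.addCases σ1 σ2)
  · intro j
    refine Fin.addCases (motive := fun j => ∀ i, i < Fin.addCases n1 n2 j →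
      ((Fin.addCases σ1 σ2 j : ℕ → List (Fin m → ℤ)) i).length = Fin.addCases N1 N2 j) ?_ ?_ j
    · intro j1 i hi
      simp only [Fin.addCases_left] at hi ⊢
      exact hσ1 j1 i hi
    · intro j2 i hi
      simp only [Fin.addCases_right] at hi ⊢
      exact hσ2 j2 i hi
  · rw [hA1, hA2]
    ext x
    simp only [Set.mem_union, Set.mem_iUnion]
    constructor
    · rintro (⟨j, hj⟩ | ⟨j, hj⟩)
      · exact ⟨Fin.castAdd J2 j, by simpa [Fin.addCases_left] using hj⟩
      · exact ⟨Fin.natAdd J1 j, by simpa [Fin.addCases_right] using hj⟩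
    · rintro ⟨j, hj⟩
      refine Fin.addCases (motive := fun j =>
        x ∈ PrimSetN D (Fin.addCases α1 α2 j) (Fin.addCases n1 n2 j) (Fin.addCases σ1 σ2 j) →
        (∃ j1, x ∈ PrimSetN D (α1 j1) (n1 j1) (σ1 j1)) ∨
          ∃ j2, x ∈ PrimSetN D (α2 j2) (n2 j2) (σ2 j2)) ?_ ?_ j hj
      · intro j1 h
        exact Or.inl ⟨j1, by simpa [Fin.addCases_left] using h⟩
      · intro j2 h
        exact Or.inr ⟨j2, by simpa [Fin.addCases_right] using h⟩

lemma goodSet_biUnion {m : ℕ} (D : ℤ) {ι : Type} (s : Set ι) (hs : s.Finite)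
    (f : ι → Set (Fin m → ℤ)) (h : ∀ p ∈ s, GoodSet D (f p)) :
    GoodSet D (⋃ p ∈ s, f p) := by
  refine Set.Finite.induction_on (motive := fun s _ =>
    (∀ p ∈ s, GoodSet D (f p)) → GoodSet D (⋃ p ∈ s, f p)) s hs ?_ ?_ h
  · intro _; simpa using goodSet_empty D
  · intro a t _ _ ih h'
    rw [Set.biUnion_insert]
    exact goodSet_union D _ _ (h' a (Set.mem_insert _ _))
      (ih fun p hp => h' p (Set.mem_insert_of_mem _ hp))
/-- language of a pattern -/
def PatLang {A : Type} (u0 : List A) (bs : List (List A × List A)) : Set (List A) :=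
  {w | ∃ e : ℕ → ℕ, w = patWord u0 bs e}

lemma patWord_congr {A : Type} : ∀ (bs : List (List A × List A)) (u0 : List A) (e e' : ℕ → ℕ),
    (∀ i < bs.length, e i = e' i) → patWord u0 bs e = patWord u0 bs e'
  | [], u0, e, e', _ => rfl
  | (v, u) :: bs, u0, e, e', h => by
    rw [patWord_cons, patWord_cons, h 0 (by simp)]
    rw [patWord_congr bs u (fun i => e (i + 1)) (fun i => e' (i + 1))
      (fun i hi => h (i + 1) (by simpa using hi))]

@[simp] lemma evalZ_replicate_zero (d : ℤ) (k : ℕ) : evalZ d (List.replicate k 0) = 0 := by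
  induction k with
  | zero => simp
  | succ k ih => simp [List.replicate_succ, ih]

lemma evalVec_single_pad {m : ℕ} (D : ℤ) (V : Fin m → ℤ) (k : ℕ) :
    evalVec D (V :: List.replicate k 0) = V := by
  funext i
  simp [evalVec_apply, List.map_replicate]

lemma exists_PS_eq (g : ℕ → ℕ) (hg : Monotone g) : ∃ e : ℕ → ℕ, ∀ i, PS e i = g i := by
  refine ⟨fun i => match i with | 0 => g 0 | (i + 1) => g (i + 1) - g i, ?_⟩
  intro i
  induction i with
  | zero => rfl
  | succ i ih =>
    show PS _ i + (g (i + 1) - g i) = g (i + 1)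
    rw [ih]
    have : g i ≤ g (i + 1) := hg (by omega)
    omega

/-- Step 2: image of a pattern language with all cycle words of equal length `N ≥ 1`. -/
lemma goodSet_image_patLang_refined {m : ℕ} (D : ℤ) (N : ℕ) (hN : 1 ≤ N)
    (u0 : List (Fin m → ℤ)) (bs : List (List (Fin m → ℤ) × List (Fin m → ℤ)))
    (hlen : ∀ b ∈ bs, (Prod.fst b).length = N) :
    GoodSet D (evalVec D '' PatLang u0 bs) := by
  obtain ⟨α, Vs, hVs, hid⟩ := core D N bs hlen u0
  set n := bs.length
  refine goodSet_of_data D _ 1 (fun _ => α) (fun _ => n) (fun _ => N)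
    (fun _ i => (Vs.getD i 0) :: List.replicate (N - 1) 0) ?_ ?_
  · intro _ i _
    simp
    omega
  · have hwp : ∀ (i : ℕ) (g : ℕ),
        evalVec D (wpow ((Vs.getD i 0) :: List.replicate (N - 1) 0) g)
          = geom (D ^ N) g • Vs.getD i 0 := by
      intro i g
      rw [evalVec_wpow, evalVec_single_pad]
      have hNN : N - 1 + 1 = N := by omega
      simp [hNN]
    ext x
    simp only [Set.mem_image, Set.mem_iUnion]
    constructor
    · rintro ⟨w, ⟨e, rfl⟩, rfl⟩
      refine ⟨0, PS e, PS_monotone e, ?_⟩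
      rw [hid e]
      congr 1
      apply Finset.sum_congr rfl
      intro i _
      rw [hwp]
    · rintro ⟨_, g, hg, hx⟩
      obtain ⟨e, hPS⟩ := exists_PS_eq g hg
      refine ⟨patWord u0 bs e, ⟨e, rfl⟩, ?_⟩
      rw [hid e, hx]
      congr 1
      apply Finset.sum_congr rfl
      intro i _
      rw [hwp, hPS]

/-- padding word used in the refinement -/
def headPad {A : Type} (bs : List (List A × List A)) (ρ : List ℕ) : List A :=
  match bs with
  | [] => []
  | (v, _) :: _ => wpow v ρ.headI

/-- refined block list -/
def refineBs {A : Type} (N : ℕ) : List (List A × List A) → List ℕ → List (List A × List A)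
  | [], _ => []
  | (v, u) :: bs, ρ => (wpow v (N / v.length), u ++ headPad bs ρ.tail) :: refineBs N bs ρ.tail

/-- the mixed exponent function -/
def mixE {A : Type} (N : ℕ) (bs : List (List A × List A)) (ρ : List ℕ) (e' : ℕ → ℕ) : ℕ → ℕ :=
  fun i => ρ.getD i 0 + (N / ((bs.getD i ([], [])).1.length)) * e' i

lemma getD_tail {β : Type*} (l : List β) (i : ℕ) (dflt : β) :
    l.tail.getD i dflt = l.getD (i + 1) dflt := by
  cases l <;> simp [List.getD]

lemma refine_correct {A : Type} (N : ℕ) :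
    ∀ (bs : List (List A × List A)) (u0 : List A) (ρ : List ℕ) (e' : ℕ → ℕ),
    patWord (u0 ++ headPad bs ρ) (refineBs N bs ρ) e' = patWord u0 bs (mixE N bs ρ e')
  | [], u0, ρ, e' => by simp [headPad, refineBs]
  | (v, u) :: bs, u0, ρ, e' => by
    rw [refineBs, patWord_cons, patWord_cons]
    rw [refine_correct N bs u ρ.tail (fun i => e' (i + 1))]
    have h1 : mixE N ((v, u) :: bs) ρ e' 0 = ρ.headI + (N / v.length) * e' 0 := by
      simp [mixE]
      cases ρ <;> simp [List.getD]
    have h2 : (fun i => mixE N ((v, u) :: bs) ρ e' (i + 1))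
        = mixE N bs ρ.tail (fun i => e' (i + 1)) := by
      funext i
      simp [mixE, getD_tail]
    rw [h1, h2]
    have h3 : wpow v (ρ.headI + (N / v.length) * e' 0)
        = wpow v ρ.headI ++ wpow (wpow v (N / v.length)) (e' 0) := by
      rw [wpow_wpow, ← wpow_add]
    rw [h3]
    simp [headPad, List.append_assoc]

/-- the finite set of residue lists -/
def resSet (N : ℕ) (n : ℕ) : Set (List ℕ) :=
  {ρ : List ℕ | ρ.length = n ∧ ∀ x ∈ ρ, x < N}

lemma resSet_finite (N n : ℕ) : (resSet N n).Finite := by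
  have h : resSet N n ⊆ (fun f : Fin n → Fin N => List.ofFn (fun i => (f i : ℕ))) '' Set.univ := by
    rintro ρ ⟨hlen, hmem⟩
    have hlt : ∀ i : Fin n, ρ.getD (i : ℕ) 0 < N := by
      intro i
      apply hmem
      have hi : (i : ℕ) < ρ.length := by rw [hlen]; exact i.isLt
      rw [List.getD_eq_getElem _ _ hi]
      exact List.getElem_mem hi
    refine ⟨fun i => ⟨ρ.getD (i : ℕ) 0, hlt i⟩, Set.mem_univ _, ?_⟩
    apply List.ext_getElem (by simp [hlen])
    intro i h1 h2
    rw [List.getElem_ofFn]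
    simpa using List.getD_eq_getElem ρ 0 h2
  exact Set.Finite.subset (Set.Finite.image _ (Set.finite_univ)) h

lemma refineBs_len {A : Type} (N : ℕ) :
    ∀ (bs : List (List A × List A)) (ρ : List ℕ),
    (∀ b ∈ bs, (Prod.fst b).length ∣ N) →
    ∀ b ∈ refineBs N bs ρ, (Prod.fst b).length = N
  | [], _, _ => by simp [refineBs]
  | (v, u) :: bs, ρ, h => by
    intro b hb
    rw [refineBs] at hb
    rcases List.mem_cons.1 hb with rfl | hb
    · have : v.length ∣ N := h (v, u) (by simp)
      simp [Nat.div_mul_cancel this]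
    · exact refineBs_len N bs ρ.tail (fun b hb => h b (by simp [hb])) b hb

lemma patLang_eq_union {A : Type} (N : ℕ) (hN : 1 ≤ N) (u0 : List A)
    (bs : List (List A × List A))
    (hdvd : ∀ b ∈ bs, (Prod.fst b).length ∣ N)
    (hpos : ∀ b ∈ bs, 1 ≤ (Prod.fst b).length) :
    PatLang u0 bs = ⋃ ρ ∈ resSet N bs.length,
      PatLang (u0 ++ headPad bs ρ) (refineBs N bs ρ) := by
  ext w
  simp only [Set.mem_iUnion]
  constructor
  · rintro ⟨e, rfl⟩
    set M : ℕ → ℕ := fun i => N / ((bs.getD i ([], [])).1.length) with hM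
    have hMpos : ∀ i < bs.length, 1 ≤ M i := by
      intro i hi
      have hmem : bs.getD i ([], []) ∈ bs := by
        rw [List.getD_eq_getElem _ _ hi]
        exact List.getElem_mem hi
      have h1 := hdvd _ hmem
      have h2 := hpos _ hmem
      have := Nat.le_of_dvd (by omega) h1
      exact Nat.one_le_div_iff (by omega) |>.2 this
    refine ⟨List.ofFn (fun i : Fin bs.length => e (i : ℕ) % M (i : ℕ)), ⟨by simp, ?_⟩, ?_⟩
    · intro x hx
      rw [List.mem_ofFn] at hx
      obtain ⟨i, rfl⟩ := hx
      calc e (i : ℕ) % M (i : ℕ) < M (i : ℕ) := Nat.mod_lt _ (hMpos _ i.isLt)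
        _ ≤ N := Nat.div_le_self _ _
    · refine ⟨fun i => e i / M i, ?_⟩
      rw [refine_correct]
      apply patWord_congr
      intro i hi
      have hget : (List.ofFn (fun i : Fin bs.length => e (i : ℕ) % M (i : ℕ))).getD i 0
          = e i % M i := by
        rw [List.getD_eq_getElem _ _ (by simp [hi])]
        simp
      have : mixE N bs (List.ofFn (fun i : Fin bs.length => e (i : ℕ) % M (i : ℕ)))
          (fun i => e i / M i) i = e i := by
        unfold mixE
        rw [hget]
        exact Nat.mod_add_div (e i) (M i)
      exact this.symm
  · rintro ⟨ρ, _, e', rfl⟩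
    exact ⟨mixE N bs ρ e', (refine_correct N bs u0 ρ e')⟩


/-- Step 3: the image of any pattern language with nonempty cycle words is Good. -/
lemma goodSet_image_patLang {m : ℕ} (D : ℤ) (u0 : List (Fin m → ℤ))
    (bs : List (List (Fin m → ℤ) × List (Fin m → ℤ)))
    (hpos : ∀ b ∈ bs, 1 ≤ (Prod.fst b).length) :
    GoodSet D (evalVec D '' PatLang u0 bs) := by
  set N : ℕ := (bs.map (fun b => (Prod.fst b).length)).prod with hNdef
  have hdvd : ∀ b ∈ bs, (Prod.fst b).length ∣ N := by
    intro b hb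
    exact List.dvd_prod (List.mem_map_of_mem hb)
  have hN : 1 ≤ N := by
    rw [hNdef, Nat.one_le_iff_ne_zero, Ne, List.prod_eq_zero_iff]
    intro hmem
    rw [List.mem_map] at hmem
    obtain ⟨b, hb, hb0⟩ := hmem
    have := hpos b hb
    omega
  rw [patLang_eq_union N hN u0 bs hdvd hpos, Set.image_iUnion₂]
  apply goodSet_biUnion D _ (resSet_finite N bs.length)
  intro ρ _
  exact goodSet_image_patLang_refined D N hN _ _ (refineBs_len N bs ρ hdvd)
/-! ### canonical representation lemmas -/

lemma evalZ_map_cast (d : ℕ) (l : List ℕ) :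
    evalZ (d : ℤ) (l.map fun k : ℕ => (k : ℤ)) = ((Nat.ofDigits d l : ℕ) : ℤ) := by
  induction l with
  | nil => rw [List.map_nil, evalZ_nil, Nat.ofDigits_nil]; simp
  | cons a l ih => rw [List.map_cons, evalZ_cons, ih, Nat.ofDigits_cons]; push_cast; ring

lemma evalZ_map_neg_cast (d : ℕ) (l : List ℕ) :
    evalZ (d : ℤ) (l.map fun k : ℕ => -(k : ℤ)) = -((Nat.ofDigits d l : ℕ) : ℤ) := by
  induction l with
  | nil => rw [List.map_nil, evalZ_nil, Nat.ofDigits_nil]; simp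
  | cons a l ih => rw [List.map_cons, evalZ_cons, ih, Nat.ofDigits_cons]; push_cast; ring

lemma canonRep_def (d : ℕ) (a : ℤ) : canonRep d a =
    if 0 ≤ a then (Nat.digits d a.toNat).map (fun k : ℕ => (k : ℤ))
    else (Nat.digits d (-a).toNat).map (fun k : ℕ => -(k : ℤ)) := by
  unfold canonRep
  have h : ∀ l : List ℕ, (List.flatMap (fun a : ℕ => [(a : ℤ)]) l) = l.map (fun k : ℕ => (k : ℤ)) := by
    intro l; induction l with
    | nil => rfl
    | cons x l ih => simp [List.flatMap_cons, ih]
  simp [h, List.map_map, Function.comp_def]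

lemma evalZ_canonRep (d : ℕ) (a : ℤ) : evalZ (d : ℤ) (canonRep d a) = a := by
  rw [canonRep_def]
  split_ifs with h
  · rw [evalZ_map_cast, Nat.ofDigits_digits]
    omega
  · rw [evalZ_map_neg_cast, Nat.ofDigits_digits]
    omega

lemma evalZ_append_replicate_zero (d : ℤ) (l : List ℤ) (k : ℕ) :
    evalZ d (l ++ List.replicate k 0) = evalZ d l := by
  rw [evalZ_append]
  simp

lemma ofFn_getD_eq (l : List ℤ) (K : ℕ) (h : l.length ≤ K) :
    (List.ofFn fun j : Fin K => l.getD (j : ℕ) 0) = l ++ List.replicate (K - l.length) 0 := by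
  apply List.ext_getElem (by simp; omega)
  intro i h1 h2
  rw [List.getElem_ofFn]
  by_cases hi : i < l.length
  · rw [List.getElem_append_left hi]
    simpa using List.getD_eq_getElem l 0 hi
  · rw [List.getElem_append_right (by omega)]
    simp only [List.getElem_replicate]
    simpa using List.getD_eq_default l 0 (by omega)

lemma evalVec_canonRepVec (d : ℕ) {m : ℕ} (a : Fin m → ℤ) :
    evalVec (d : ℤ) (canonRepVec d a) = a := by
  funext i
  rw [evalVec_apply]
  have hle : (canonRep d (a i)).length ≤
      Finset.univ.sup fun i => (canonRep d (a i)).length :=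
    Finset.le_sup (f := fun i => (canonRep d (a i)).length) (Finset.mem_univ i)
  have h1 : (canonRepVec d a).map (fun v => v i)
      = List.ofFn (fun j : Fin (Finset.univ.sup fun i => (canonRep d (a i)).length) =>
          (canonRep d (a i)).getD (j : ℕ) 0) := by
    unfold canonRepVec
    rw [List.map_ofFn]
    rfl
  rw [h1, ofFn_getD_eq _ _ hle, evalZ_append_replicate_zero, evalZ_canonRep]

/-- the finite alphabet of digit-vectors -/
def Dset (d : ℕ) (m : ℕ) : Set (Fin m → ℤ) :=
  {x | ∀ i, -(d : ℤ) < x i ∧ x i < d}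

lemma Dset_finite (d m : ℕ) : (Dset d m).Finite := by
  have : Dset d m ⊆ Set.pi Set.univ fun _ : Fin m => Set.Ioo (-(d : ℤ)) d := by
    intro x hx
    intro i _
    exact ⟨(hx i).1, (hx i).2⟩
  exact Set.Finite.subset (Set.Finite.pi fun i => Set.finite_Ioo _ _) this

lemma canonRep_digit_bound (d : ℕ) (hd : 2 ≤ d) (a : ℤ) :
    ∀ x ∈ canonRep d a, -(d : ℤ) < x ∧ x < d := by
  intro x hx
  rw [canonRep_def] at hx
  split_ifs at hx with h
  · rw [List.mem_map] at hx
    obtain ⟨k, hk, rfl⟩ := hx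
    have := Nat.digits_lt_base hd hk
    have h0 : (0 : ℤ) ≤ (k : ℤ) := Int.natCast_nonneg k
    have h2 : (0 : ℤ) < (d : ℤ) := by exact_mod_cast (by omega : 0 < d)
    constructor
    · omega
    · exact_mod_cast this
  · rw [List.mem_map] at hx
    obtain ⟨k, hk, rfl⟩ := hx
    have := Nat.digits_lt_base hd hk
    constructor
    · simp only [neg_lt_neg_iff]
      exact_mod_cast this
    · have : (0 : ℤ) ≤ (k : ℤ) := by positivity
      omega

lemma canonRepVec_letters (d : ℕ) (hd : 2 ≤ d) {m : ℕ} (a : Fin m → ℤ) :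
    ∀ x ∈ canonRepVec d a, x ∈ Dset d m := by
  intro x hx
  unfold canonRepVec at hx
  rw [List.mem_ofFn] at hx
  obtain ⟨j, rfl⟩ := hx
  intro i
  dsimp only
  by_cases hj : (j : ℕ) < (canonRep d (a i)).length
  · apply canonRep_digit_bound d hd (a i)
    rw [List.getD_eq_getElem _ _ hj]
    exact List.getElem_mem hj
  · rw [List.getD_eq_default _ _ (by omega)]
    constructor <;> [omega; omega]

/-! ### polynomial vs exponential -/

lemma poly_lt_two_pow (C a b p : ℕ) : ∃ r : ℕ, C * ((a + b * r) ^ p + 1) < 2 ^ r := by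
  obtain ⟨K, hK⟩ : ∃ K : ℕ, K = C * ((a + b + 1) ^ p + 1) + 1 := ⟨_, rfl⟩
  have hlit := isLittleO_pow_const_const_pow_of_one_lt (R := ℝ) p (by norm_num : (1 : ℝ) < 2)
  have hb' := hlit.def (c := 1 / K) (by rw [hK]; positivity)
  obtain ⟨r0, hr0⟩ := Filter.eventually_atTop.1 hb'
  refine ⟨max r0 1, ?_⟩
  set r : ℕ := max r0 1 with hrdef
  have hr1 : 1 ≤ r := le_max_right _ _
  have hKpos : (0 : ℝ) < (K : ℝ) := by rw [hK]; positivity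
  have hreal : (K : ℝ) * (r : ℝ) ^ p ≤ 2 ^ r := by
    have h0 := hr0 r (le_max_left _ _)
    rw [Real.norm_eq_abs, Real.norm_eq_abs] at h0
    rw [abs_of_nonneg (by positivity), abs_of_nonneg (by positivity)] at h0
    calc (K : ℝ) * (r : ℝ) ^ p ≤ (K : ℝ) * (1 / K * 2 ^ r) := by
          apply mul_le_mul_of_nonneg_left h0 (le_of_lt hKpos)
      _ = 2 ^ r := by field_simp
  have hnat : K * r ^ p ≤ 2 ^ r := by
    have h2 : ((K * r ^ p : ℕ) : ℝ) ≤ ((2 ^ r : ℕ) : ℝ) := by push_cast; exact hreal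
    exact_mod_cast h2
  have h4 : (1 : ℕ) ≤ r ^ p := Nat.one_le_pow _ _ (by omega)
  have hstep : C * ((a + b * r) ^ p + 1) + r ^ p ≤ K * r ^ p := by
    have h1 : a + b * r ≤ (a + b + 1) * r := by nlinarith
    have h2 : (a + b * r) ^ p ≤ ((a + b + 1) * r) ^ p := Nat.pow_le_pow_left h1 p
    have h3 : ((a + b + 1) * r) ^ p = (a + b + 1) ^ p * r ^ p := mul_pow _ _ _
    calc C * ((a + b * r) ^ p + 1) + r ^ p
        ≤ C * ((a + b + 1) ^ p * r ^ p + r ^ p) + r ^ p := by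
          have : (a + b * r) ^ p + 1 ≤ (a + b + 1) ^ p * r ^ p + r ^ p := by
            rw [← h3]; omega
          exact Nat.add_le_add_right (Nat.mul_le_mul_left C this) _
      _ = (C * ((a + b + 1) ^ p + 1)) * r ^ p + r ^ p := by ring
      _ = K * r ^ p := by rw [hK, Nat.succ_mul]
  omega

/-! ### DFA lemmas -/

section Automata

set_option linter.unusedSectionVars false

variable {A : Type} {Q : Type} [Fintype Q] (M : DFA A Q)

lemma evalFrom_wpow (q : Q) (v : List A) (h : M.evalFrom q v = q) (t : ℕ) :
    M.evalFrom q (wpow v t) = q := by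
  induction t with
  | zero => simp [DFA.evalFrom]
  | succ t ih => rw [wpow_succ, DFA.evalFrom_of_append, h, ih]

lemma blocks_loop (q : Q) (u v : List A) (hu : M.evalFrom q u = q) (hv : M.evalFrom q v = q) :
    ∀ s : List Bool, M.evalFrom q ((s.map fun b => if b then u else v).flatten) = q := by
  intro s
  induction s with
  | nil => simp [DFA.evalFrom]
  | cons b s ih =>
    rw [List.map_cons, List.flatten_cons, DFA.evalFrom_of_append]
    cases b <;> simp [hu, hv, ih]

lemma blocks_length {u v : List A} (hlen : u.length = v.length) :
    ∀ s : List Bool, ((s.map fun b => if b then u else v).flatten).length = s.length * u.length := by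
  intro s
  induction s with
  | nil => simp
  | cons b s ih =>
    rw [List.map_cons, List.flatten_cons, List.length_append, ih]
    cases b <;> simp [hlen] <;> ring

lemma blocks_inj {u v : List A} (hlen : u.length = v.length) (hne : u ≠ v) :
    ∀ s s' : List Bool, s.length = s'.length →
      (s.map fun b => if b then u else v).flatten = (s'.map fun b => if b then u else v).flatten →
      s = s' := by
  intro s
  induction s with
  | nil =>
    intro s' hl _
    cases s' with
    | nil => rfl
    | cons => simp at hl
  | cons b s ih =>
    intro s' hl hflat
    cases s' with
    | nil => simp at hl
    | cons b' s' =>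
      rw [List.map_cons, List.map_cons, List.flatten_cons, List.flatten_cons] at hflat
      have hlh : (if b then u else v).length = (if b' then u else v).length := by
        cases b <;> cases b' <;> simp [hlen]
      obtain ⟨h1, h2⟩ := List.append_inj hflat hlh
      have hbb : b = b' := by
        cases b <;> cases b' <;> simp_all
      rw [hbb, ih s' (by simpa using hl) h2]

/-- Claim W: at a useful state, two loops of equal length must coincide
(else the language has exponential growth). -/
lemma loops_eq (L : Set (List A)) (hML : M.accepts = L) (C p : ℕ)
    (hcount : ∀ k : ℕ, {σ ∈ L | σ.length ≤ k}.Finite ∧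
      {σ ∈ L | σ.length ≤ k}.ncard ≤ C * (k ^ p + 1))
    (q : Q) (x y u v : List A)
    (hx : M.eval x = q) (hy : M.evalFrom q y ∈ M.accept)
    (hu : M.evalFrom q u = q) (hv : M.evalFrom q v = q)
    (hlen : u.length = v.length) (hupos : u ≠ []) : u = v := by
  by_contra hne
  obtain ⟨r, hr⟩ := poly_lt_two_pow C (x.length + y.length) u.length p
  set k : ℕ := x.length + y.length + u.length * r with hk
  set G : (Fin r → Bool) → List A :=
    fun s => x ++ (((List.ofFn s).map fun b => if b then u else v).flatten ++ y) with hG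
  have hGmem : ∀ s, G s ∈ {σ ∈ L | σ.length ≤ k} := by
    intro s
    constructor
    · rw [← hML]
      show M.eval _ ∈ M.accept
      rw [hG]
      show M.eval (x ++ _) ∈ M.accept
      unfold DFA.eval
      rw [DFA.evalFrom_of_append, DFA.evalFrom_of_append]
      rw [show M.evalFrom M.start x = q from hx]
      rw [blocks_loop M q u v hu hv]
      exact hy
    · show (x ++ _).length ≤ k
      rw [List.length_append, List.length_append, blocks_length hlen]
      simp only [List.length_ofFn]
      have hmc : r * u.length = u.length * r := Nat.mul_comm _ _
      omega
  have hGinj : Function.Injective G := by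
    intro s s' h
    rw [hG] at h
    dsimp only at h
    have h1 := List.append_cancel_left h
    have h2 := List.append_cancel_right h1
    have h3 := blocks_inj hlen hne (List.ofFn s) (List.ofFn s') (by simp) h2
    exact List.ofFn_injective h3
  have hfin := (hcount k).1
  have hcard := (hcount k).2
  have h2r : 2 ^ r ≤ {σ ∈ L | σ.length ≤ k}.ncard := by
    have hrange : (Set.range G).ncard = 2 ^ r := by
      rw [← Set.image_univ, Set.ncard_image_of_injective _ hGinj, Set.ncard_univ,
        Nat.card_eq_fintype_card]
      simp
    rw [← hrange]
    exact Set.ncard_le_ncard (Set.range_subset_iff.2 hGmem) hfin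
  have hmc : r * u.length = u.length * r := Nat.mul_comm _ _
  have hfinal := le_trans h2r hcard
  omega

end Automata
section Automata2

set_option linter.unusedSectionVars false

variable {A : Type} {Q : Type} [Fintype Q] (M : DFA A Q)

lemma exists_short_loop (Ds : Set A) (q : Q) :
    ∀ (n : ℕ) (z : List A), z.length ≤ n → z ≠ [] → M.evalFrom q z = q → (∀ a ∈ z, a ∈ Ds) →
    ∃ v : List A, v ≠ [] ∧ v.length ≤ Fintype.card Q ∧ M.evalFrom q v = q ∧ ∀ a ∈ v, a ∈ Ds := by
  intro n
  induction n with
  | zero =>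
    intro z hzn hz _ _
    exact absurd (List.length_eq_zero_iff.1 (by omega)) hz
  | succ n ih =>
    intro z hzn hz hloop hD
    by_cases hlen : z.length ≤ Fintype.card Q
    · exact ⟨z, hz, hlen, hloop, hD⟩
    · push_neg at hlen
      obtain ⟨s, s', hne, heq⟩ := Fintype.exists_ne_map_eq_of_card_lt
        (fun t : Fin (Fintype.card Q + 1) => M.evalFrom q (z.take (t : ℕ)))
        (by simp)
      wlog hss : (s : ℕ) < (s' : ℕ) generalizing s s'
      · have hvne := Fin.val_ne_of_ne hne
        exact this s' s hne.symm heq.symm (by omega)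
      set z' : List A := z.take (s : ℕ) ++ z.drop (s' : ℕ) with hz'
      have hs'len : (s' : ℕ) < z.length := by
        have := s'.isLt
        omega
      have hloop' : M.evalFrom q z' = q := by
        rw [hz', DFA.evalFrom_of_append, heq]
        have : M.evalFrom q z = q := hloop
        calc M.evalFrom (M.evalFrom q (z.take (s' : ℕ))) (z.drop (s' : ℕ))
            = M.evalFrom q (z.take (s' : ℕ) ++ z.drop (s' : ℕ)) :=
              (DFA.evalFrom_of_append M q _ _).symm
          _ = q := by rw [List.take_append_drop]; exact hloop
      have hlen' : z'.length ≤ n := by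
        rw [hz']
        rw [List.length_append, List.length_take, List.length_drop]
        have := s'.isLt
        omega
      have hne' : z' ≠ [] := by
        apply List.ne_nil_of_length_pos
        rw [hz', List.length_append, List.length_drop]
        omega
      apply ih z' hlen' hne' hloop'
      intro a ha
      rw [hz', List.mem_append] at ha
      rcases ha with ha | ha
      · exact hD a ((List.take_sublist _ _).subset ha)
      · exact hD a ((List.drop_sublist _ _).subset ha)

/-- At a useful state of a sparse automaton, every loop (with letters in `Ds`)
is a power of a single minimal loop word. -/
lemma min_loop (L : Set (List A)) (hML : M.accepts = L) (C p : ℕ)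
    (hcount : ∀ k : ℕ, {σ ∈ L | σ.length ≤ k}.Finite ∧
      {σ ∈ L | σ.length ≤ k}.ncard ≤ C * (k ^ p + 1))
    (Ds : Set A) (q : Q) (x y : List A)
    (hx : M.eval x = q) (hy : M.evalFrom q y ∈ M.accept)
    (z0 : List A) (hz0 : z0 ≠ []) (hz0loop : M.evalFrom q z0 = q) (hz0D : ∀ a ∈ z0, a ∈ Ds) :
    ∃ v : List A, v ≠ [] ∧ v.length ≤ Fintype.card Q ∧ M.evalFrom q v = q ∧
      (∀ a ∈ v, a ∈ Ds) ∧
      ∀ z : List A, M.evalFrom q z = q → (∀ a ∈ z, a ∈ Ds) → ∃ t, z = wpow v t := by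
  classical
  obtain ⟨w0, hw0ne, hw0len, hw0loop, hw0D⟩ :=
    exists_short_loop M Ds q z0.length z0 le_rfl hz0 hz0loop hz0D
  have hP : ∃ l : ℕ, 0 < l ∧ ∃ v : List A, v.length = l ∧ M.evalFrom q v = q ∧
      (∀ a ∈ v, a ∈ Ds) :=
    ⟨w0.length, List.length_pos_of_ne_nil hw0ne, w0, rfl, hw0loop, hw0D⟩
  set c : ℕ := Nat.find hP with hc
  obtain ⟨hcpos, v, hvlen, hvloop, hvD⟩ := Nat.find_spec hP
  rw [← hc] at hcpos hvlen
  have hcmin : ∀ z : List A, z ≠ [] → M.evalFrom q z = q → (∀ a ∈ z, a ∈ Ds) →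
      c ≤ z.length := by
    intro z hzne hzloop hzD
    exact Nat.find_min' hP ⟨List.length_pos_of_ne_nil hzne, z, rfl, hzloop, hzD⟩
  have hvne : v ≠ [] := List.ne_nil_of_length_pos (by omega)
  have hcQ : c ≤ Fintype.card Q := le_trans (hcmin w0 hw0ne hw0loop hw0D) hw0len
  refine ⟨v, hvne, by omega, hvloop, hvD, ?_⟩
  -- strong induction on z.length
  suffices h : ∀ (n : ℕ) (z : List A), z.length ≤ n → M.evalFrom q z = q →
      (∀ a ∈ z, a ∈ Ds) → ∃ t, z = wpow v t by
    intro z hzl hzD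
    exact h z.length z le_rfl hzl hzD
  intro n
  induction n with
  | zero =>
    intro z hlen _ _
    have : z = [] := List.length_eq_zero_iff.1 (by omega)
    exact ⟨0, by simp [this]⟩
  | succ n ih =>
    intro z hlen hzloop hzD
    by_cases hzne : z = []
    · exact ⟨0, by simp [hzne]⟩
    · have hcz : c ≤ z.length := hcmin z hzne hzloop hzD
      have hzpos : 0 < z.length := List.length_pos_of_ne_nil hzne
      -- compatibility
      have hcompat : wpow z c = wpow v z.length := by
        apply loops_eq M L hML C p hcount q x y _ _ hx hy
          (evalFrom_wpow M q z hzloop c) (evalFrom_wpow M q v hvloop z.length)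
        · rw [wpow_length, wpow_length, hvlen]
          ring
        · apply List.ne_nil_of_length_pos
          rw [wpow_length]
          have : 0 < c * z.length := Nat.mul_pos hcpos hzpos
          omega
      -- v is the prefix of z of length c
      have hpref : z.take c = v := by
        obtain ⟨c', hc'⟩ : ∃ c', c = c' + 1 := ⟨c - 1, by omega⟩
        obtain ⟨l', hl'⟩ : ∃ l', z.length = l' + 1 := ⟨z.length - 1, by omega⟩
        have h1 : z.take c = (wpow z c).take c := by
          rw [hc', wpow_succ, List.take_append_of_le_length (by omega)]
        have h2 : (wpow v z.length).take c = v := by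
          rw [hl', wpow_succ, ← hvlen, List.take_left]
        rw [h1, hcompat, h2]
      -- the rest is a shorter loop
      have hdroploop : M.evalFrom q (z.drop c) = q := by
        have := DFA.evalFrom_of_append M q (z.take c) (z.drop c)
        rw [List.take_append_drop, hpref, hvloop] at this
        rw [← this, hzloop]
      have hdroplen : (z.drop c).length ≤ n := by
        rw [List.length_drop]
        omega
      obtain ⟨t, ht⟩ := ih (z.drop c) hdroplen hdroploop
        (fun a ha => hzD a ((List.drop_sublist _ _).subset ha))
      refine ⟨t + 1, ?_⟩
      rw [wpow_succ, ← ht, ← hpref, List.take_append_drop]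

end Automata2
section Decomp

set_option linter.unusedSectionVars false
set_option maxHeartbeats 1000000

variable {A : Type} {Q : Type} [Fintype Q] (M : DFA A Q)

lemma decomp (L : Set (List A)) (hML : M.accepts = L) (C p : ℕ)
    (hcount : ∀ k : ℕ, {σ ∈ L | σ.length ≤ k}.Finite ∧
      {σ ∈ L | σ.length ≤ k}.ncard ≤ C * (k ^ p + 1))
    (Ds : Set A) :
    ∀ (k : ℕ) (T : Finset Q), Fintype.card Q ≤ T.card + k →
    ∀ (p0 : Q) (w : List A),
    (∃ x, M.eval x = p0) →
    (∀ a ∈ w, a ∈ Ds) →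
    M.evalFrom p0 w ∈ M.accept →
    (∀ t, 1 ≤ t → t ≤ w.length → M.evalFrom p0 (w.take t) ∉ T) →
    ∃ (u0 : List A) (bs : List (List A × List A)) (e : ℕ → ℕ),
      w = patWord u0 bs e ∧
      bs.length ≤ k ∧
      u0.length ≤ Fintype.card Q ∧ (∀ a ∈ u0, a ∈ Ds) ∧
      (∀ b ∈ bs, (Prod.fst b ≠ [] ∧ (Prod.fst b).length ≤ Fintype.card Q ∧
        (∀ a ∈ Prod.fst b, a ∈ Ds)) ∧
        ((Prod.snd b).length ≤ Fintype.card Q ∧ ∀ a ∈ Prod.snd b, a ∈ Ds)) ∧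
      (∀ e' : ℕ → ℕ, M.evalFrom p0 (patWord u0 bs e') ∈ M.accept) := by
  intro k
  induction k with
  | zero =>
    intro T hT p0 w _ hD hacc havoid
    have hTcard : T.card = Fintype.card Q := le_antisymm (Finset.card_le_univ T) (by omega)
    have hTuniv : T = Finset.univ := Finset.eq_univ_of_card T hTcard
    have hw : w = [] := by
      by_contra hne
      have hlen : 1 ≤ w.length := List.length_pos_of_ne_nil hne
      exact havoid 1 le_rfl hlen (by rw [hTuniv]; exact Finset.mem_univ _)
    refine ⟨[], [], fun _ => 0, by simp [hw], by simp, by simp, by simp, by simp, ?_⟩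
    intro e'
    show M.evalFrom p0 [] ∈ M.accept
    rw [hw] at hacc
    exact hacc
  | succ k ih =>
    intro T hT p0 w hreach hD hacc havoid
    classical
    obtain ⟨x0, hx0⟩ := hreach
    by_cases hrep : ∃ i, ∃ j, i < j ∧ j ≤ w.length ∧
        M.evalFrom p0 (w.take j) = M.evalFrom p0 (w.take i)
    · -- there is a repeated state
      set i := Nat.find hrep with hidef
      obtain ⟨j, hij, hjle, hjeq⟩ := Nat.find_spec hrep
      set q := M.evalFrom p0 (w.take i) with hq
      have hile : i ≤ w.length := by omega
      have hqT : q ∉ T := by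
        have := havoid j (by omega) hjle
        rw [hjeq] at this
        exact this
      have hiQ : i ≤ Fintype.card Q := by
        by_contra hgt
        push_neg at hgt
        obtain ⟨a, b, hab, heq2⟩ := Fintype.exists_ne_map_eq_of_card_lt
          (fun t : Fin (Fintype.card Q + 1) => M.evalFrom p0 (w.take (t : ℕ))) (by simp)
        have haQ : (a : ℕ) ≤ Fintype.card Q := by have := a.isLt; omega
        have hbQ : (b : ℕ) ≤ Fintype.card Q := by have := b.isLt; omega
        have habne : (a : ℕ) ≠ (b : ℕ) := Fin.val_ne_of_ne hab
        rcases Nat.lt_or_ge (a : ℕ) (b : ℕ) with hlt | hge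
        · exact Nat.find_min hrep (show (a : ℕ) < i by omega)
            ⟨b, hlt, by omega, heq2.symm⟩
        · exact Nat.find_min hrep (show (b : ℕ) < i by omega)
            ⟨a, by omega, by omega, heq2⟩
      set s := w.drop i with hs
      have hslen : s.length = w.length - i := List.length_drop
      have hsq : M.evalFrom q s = M.evalFrom p0 w := by
        rw [hq, ← DFA.evalFrom_of_append, List.take_append_drop]
      have hsD : ∀ a ∈ s, a ∈ Ds := fun a ha => hD a ((List.drop_sublist _ _).subset ha)
      set P : ℕ → Prop := fun t => M.evalFrom q (s.take t) = q with hPdef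
      set tm := Nat.findGreatest P s.length with htmdef
      have htm_spec : P tm := Nat.findGreatest_spec (Nat.zero_le _) (by simp [hPdef])
      have htm_le : tm ≤ s.length := Nat.findGreatest_le _
      have hjt : P (j - i) := by
        show M.evalFrom q (s.take (j - i)) = q
        have hsplit : w.take j = w.take i ++ (w.drop i).take (j - i) := by
          have h0 : j = i + (j - i) := by omega
          conv_lhs => rw [h0, List.take_add]
        rw [hq, ← DFA.evalFrom_of_append, ← hsplit, hjeq]
      have htm_pos : 1 ≤ tm := by
        have := Nat.le_findGreatest (show j - i ≤ s.length by omega) hjt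
        omega
      set z := s.take tm with hz
      set w2 := s.drop tm with hw2
      have hzw2 : z ++ w2 = s := List.take_append_drop tm s
      have hzloop : M.evalFrom q z = q := htm_spec
      have hzD : ∀ a ∈ z, a ∈ Ds := fun a ha => hsD a ((List.take_sublist _ _).subset ha)
      have hw2D : ∀ a ∈ w2, a ∈ Ds := fun a ha => hsD a ((List.drop_sublist _ _).subset ha)
      have hzne : z ≠ [] := by
        apply List.ne_nil_of_length_pos
        rw [hz, List.length_take]
        omega
      have hqreach : M.eval (x0 ++ w.take i) = q := by
        show M.evalFrom M.start _ = q
        rw [DFA.evalFrom_of_append]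
        rw [show M.evalFrom M.start x0 = p0 from hx0]
      have hyco : M.evalFrom q s ∈ M.accept := by rw [hsq]; exact hacc
      obtain ⟨v, hvne, hvlen, hvloop, hvD, hvpow⟩ :=
        min_loop M L hML C p hcount Ds q (x0 ++ w.take i) s hqreach hyco z hzne hzloop hzD
      obtain ⟨t1, ht1⟩ := hvpow z hzloop hzD
      -- recursive call
      have hcard' : Fintype.card Q ≤ (insert q T).card + k := by
        rw [Finset.card_insert_of_notMem hqT]
        omega
      have hw2acc : M.evalFrom q w2 ∈ M.accept := by
        have : M.evalFrom q (z ++ w2) = M.evalFrom q w2 := by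
          rw [DFA.evalFrom_of_append, hzloop]
        rw [hzw2] at this
        rw [← this]
        exact hyco
      have hkey : ∀ t, M.evalFrom q (w2.take t) = M.evalFrom q (s.take (tm + t)) := by
        intro t
        rw [List.take_add, DFA.evalFrom_of_append, ← hz, ← hw2, hzloop]
      have havoid' : ∀ t, 1 ≤ t → t ≤ w2.length →
          M.evalFrom q (w2.take t) ∉ insert q T := by
        intro t ht1' ht2
        rw [Finset.mem_insert]
        push_neg
        constructor
        · intro hbad
          have hgr : tm < tm + t := by omega
          have hle2 : tm + t ≤ s.length := by
            rw [hw2, List.length_drop] at ht2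
            omega
          apply Nat.findGreatest_is_greatest hgr hle2
          show M.evalFrom q (List.take (tm + t) s) = q
          rw [← hkey t]
          exact hbad
        · have hw2t : M.evalFrom q (w2.take t) = M.evalFrom p0 (w.take (i + (tm + t))) := by
            rw [hkey t]
            rw [List.take_add (l := w) (i := i) (j := tm + t), DFA.evalFrom_of_append, ← hq, ← hs]
          rw [hw2t]
          apply havoid
          · omega
          · rw [hw2, List.length_drop] at ht2
            omega
      obtain ⟨u2, bs2, e2, hw2eq, hbs2len, hu2len, hu2D, hbs2, hval2⟩ :=
        ih (insert q T) hcard' q w2 ⟨x0 ++ w.take i, hqreach⟩ hw2D hw2acc havoid'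
      set e : ℕ → ℕ := fun nn => Nat.casesOn nn t1 e2 with he
      have hshift : ∀ (bs' : List (List A × List A)) (u' : List A),
          patWord u' bs' (fun i => e (i + 1)) = patWord u' bs' e2 := by
        intro bs' u'
        apply patWord_congr
        intro i _
        rfl
      refine ⟨w.take i, (v, u2) :: bs2, e, ?_, ?_, ?_, ?_, ?_, ?_⟩
      · rw [patWord_cons, hshift, ← hw2eq]
        have he0 : e 0 = t1 := rfl
        rw [he0, ← ht1, hzw2]
        rw [List.take_append_drop]
      · simp only [List.length_cons]
        omega
      · calc (w.take i).length ≤ i := by rw [List.length_take]; omega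
          _ ≤ Fintype.card Q := hiQ
      · exact fun a ha => hD a ((List.take_sublist _ _).subset ha)
      · intro b hb
        rcases List.mem_cons.1 hb with rfl | hb
        · exact ⟨⟨hvne, hvlen, hvD⟩, hu2len, hu2D⟩
        · exact hbs2 b hb
      · intro e'
        rw [patWord_cons, DFA.evalFrom_of_append, ← hq, DFA.evalFrom_of_append,
          evalFrom_wpow M q v hvloop]
        exact hval2 (fun i => e' (i + 1))
    · -- no repeated state: w itself is short
      push_neg at hrep
      have hinj : Function.Injective
          (fun t : Fin (w.length + 1) => M.evalFrom p0 (w.take (t : ℕ))) := by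
        intro a b hab
        by_contra hne
        have habne : (a : ℕ) ≠ (b : ℕ) := Fin.val_ne_of_ne hne
        rcases Nat.lt_or_ge (a : ℕ) (b : ℕ) with hlt | hge
        · exact hrep (a : ℕ) (b : ℕ) hlt (by have := b.isLt; omega) hab.symm
        · exact hrep (b : ℕ) (a : ℕ) (by omega) (by have := a.isLt; omega) hab
      have hlenQ : w.length + 1 ≤ Fintype.card Q := by
        have := Fintype.card_le_of_injective _ hinj
        simpa using this
      refine ⟨w, [], fun _ => 0, by simp, by simp, by omega, hD, by simp, ?_⟩
      intro e'
      show M.evalFrom p0 w ∈ M.accept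
      exact hacc

end Decomp
lemma finite_bounded_lists {A : Type} (S : Set A) (hS : S.Finite) (n : ℕ) :
    {l : List A | l.length ≤ n ∧ ∀ a ∈ l, a ∈ S}.Finite := by
  haveI := hS.to_subtype
  have hsub : {l : List A | l.length ≤ n ∧ ∀ a ∈ l, a ∈ S}
      ⊆ (List.map (Subtype.val : S → A)) '' {l : List S | l.length ≤ n} := by
    rintro l ⟨hlen, hmem⟩
    refine ⟨l.attach.map (fun x => ⟨x.1, hmem x.1 x.2⟩), by simpa using hlen, ?_⟩
    rw [List.map_map]
    have : (Subtype.val ∘ fun x : {a // a ∈ l} => (⟨x.1, hmem x.1 x.2⟩ : S))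
        = fun x : {a // a ∈ l} => x.1 := rfl
    rw [this]
    exact List.attach_map_subtype_val l
  exact Set.Finite.subset (Set.Finite.image _ (List.finite_length_le S n)) hsub

/-- A sparse regular language is a finite union of pattern languages. -/
lemma accepts_eq_union {A Q : Type} [Fintype Q] (M : DFA A Q) (L : Set (List A))
    (hML : M.accepts = L) (C p : ℕ)
    (hcount : ∀ k : ℕ, {σ ∈ L | σ.length ≤ k}.Finite ∧
      {σ ∈ L | σ.length ≤ k}.ncard ≤ C * (k ^ p + 1))
    (Ds : Set A) (hDs : Ds.Finite) (hletters : ∀ w ∈ L, ∀ a ∈ w, a ∈ Ds) :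
    ∃ Pats : Set (List A × List (List A × List A)), Pats.Finite ∧
      (∀ pb ∈ Pats, (∀ b ∈ pb.2, Prod.fst b ≠ []) ∧ PatLang pb.1 pb.2 ⊆ L) ∧
      L = ⋃ pb ∈ Pats, PatLang pb.1 pb.2 := by
  set B := Fintype.card Q with hB
  set LB : Set (List A) := {l | l.length ≤ B ∧ ∀ a ∈ l, a ∈ Ds} with hLB
  set SB : Set (List A × List A) :=
    {b | (b.1 ≠ [] ∧ b.1.length ≤ B ∧ ∀ a ∈ b.1, a ∈ Ds) ∧
      (b.2.length ≤ B ∧ ∀ a ∈ b.2, a ∈ Ds)} with hSB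
  set Pats : Set (List A × List (List A × List A)) :=
    {pb | (pb.1.length ≤ B ∧ ∀ a ∈ pb.1, a ∈ Ds) ∧ pb.2.length ≤ B ∧
      (∀ b ∈ pb.2, b ∈ SB) ∧ PatLang pb.1 pb.2 ⊆ L} with hPats
  have hLBfin : LB.Finite := finite_bounded_lists Ds hDs B
  have hSBfin : SB.Finite := by
    apply Set.Finite.subset (Set.Finite.prod hLBfin hLBfin)
    rintro ⟨b1, b2⟩ ⟨⟨_, h2, h3⟩, h4, h5⟩
    exact ⟨⟨h2, h3⟩, h4, h5⟩
  have hPfin : Pats.Finite := by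
    apply Set.Finite.subset (Set.Finite.prod hLBfin
      (finite_bounded_lists SB hSBfin B))
    rintro ⟨u0, bs⟩ ⟨⟨h1, h2⟩, h3, h4, _⟩
    exact ⟨⟨h1, h2⟩, h3, h4⟩
  refine ⟨Pats, hPfin, ?_, ?_⟩
  · rintro ⟨u0, bs⟩ ⟨_, _, h4, h5⟩
    exact ⟨fun b hb => (h4 b hb).1.1, h5⟩
  · ext w
    simp only [Set.mem_iUnion]
    constructor
    · intro hw
      have hwacc : M.evalFrom M.start w ∈ M.accept := by
        have : w ∈ M.accepts := by rw [hML]; exact hw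
        exact this
      obtain ⟨u0, bs, e, hweq, hbslen, hu0len, hu0D, hbs, hval⟩ :=
        decomp M L hML C p hcount Ds B ∅ (by simp [hB]) M.start w
          ⟨[], rfl⟩ (hletters w hw) hwacc (by simp)
      refine ⟨(u0, bs), ?_, ⟨e, hweq⟩⟩
      refine ⟨⟨hu0len, hu0D⟩, hbslen, fun b hb => ?_, ?_⟩
      · exact hbs b hb
      · rintro w' ⟨e', rfl⟩
        rw [← hML]
        exact hval e'
    · rintro ⟨pb, hpb, hw⟩
      exact hpb.2.2.2 hw
end Sparse5

theorem stmt5 (d : ℕ) (hd : 2 ≤ d) (m : ℕ) (hm : 1 ≤ m)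
    (A : Set (Fin m → ℤ)) (hA : SparseVec d A) :
    ∃ (J : ℕ) (α : Fin J → (Fin m → ℤ)) (n : Fin J → ℕ) (N : Fin J → ℕ)
      (σ : (j : Fin J) → Fin (n j) → List (Fin m → ℤ)),
      (∀ j i, (σ j i).length = N j) ∧
      A = ⋃ j : Fin J, {x | ∃ e : Fin (n j) → ℕ, Monotone e ∧
        x = α j + ∑ i : Fin (n j), evalVec d (wpow (σ j i) (e i))} := by
  open Sparse5 in
  obtain ⟨⟨Q, fQ, M, hML⟩, C, p, hcount⟩ := hA
  haveI := fQ
  set L : Set (List (Fin m → ℤ)) := canonRepVec d '' A with hL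
  have hletters : ∀ w ∈ L, ∀ a ∈ w, a ∈ Sparse5.Dset d m := by
    rintro w ⟨x, _, rfl⟩
    exact Sparse5.canonRepVec_letters d hd x
  obtain ⟨Pats, hPfin, hPprop, hLU⟩ := Sparse5.accepts_eq_union M L hML C p hcount
    (Sparse5.Dset d m) (Sparse5.Dset_finite d m) hletters
  have hmem : ∀ x : Fin m → ℤ, x ∈ A ↔ canonRepVec d x ∈ L := by
    intro x
    constructor
    · intro hx
      exact Set.mem_image_of_mem _ hx
    · rintro ⟨x', hx', heq⟩
      have : x' = x := by
        have h1 := Sparse5.evalVec_canonRepVec d x'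
        have h2 := Sparse5.evalVec_canonRepVec d x
        rw [← h1, heq, h2]
      rw [← this]
      exact hx'
  have hAU : A = ⋃ pb ∈ Pats, evalVec (d : ℤ) '' Sparse5.PatLang pb.1 pb.2 := by
    ext x
    simp only [Set.mem_iUnion]
    constructor
    · intro hx
      have h1 := (hmem x).1 hx
      rw [hLU] at h1
      simp only [Set.mem_iUnion] at h1
      obtain ⟨pb, hpb, hw⟩ := h1
      exact ⟨pb, hpb, canonRepVec d x, hw, Sparse5.evalVec_canonRepVec d x⟩
    · rintro ⟨pb, hpb, w, hw, rfl⟩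
      have hwL : w ∈ L := (hPprop pb hpb).2 hw
      obtain ⟨x', hx', rfl⟩ := hwL
      rw [Sparse5.evalVec_canonRepVec]
      exact hx'
  have hGood : Sparse5.GoodSet (d : ℤ) A := by
    rw [hAU]
    apply Sparse5.goodSet_biUnion _ _ hPfin
    intro pb hpb
    apply Sparse5.goodSet_image_patLang
    intro b hb
    have := (hPprop pb hpb).1 b hb
    exact List.length_pos_of_ne_nil this
  obtain ⟨J, α, n, N, σ, h1, h2⟩ := hGood
  exact ⟨J, α, n, N, σ, h1, h2⟩
end

section
/- Fix an integer d ≥ 2. Suppose A ⊆ ℕ is d-automatic and let L = {σ ∈ Σ* : [σ] ∈ A}. Then A is generic in ℕ if and only if for every r ∈ ℕ, every integer s ≥ 1, and every word τ ∈ Σ*, there exist k ∈ ℕ and a word ρ ∈ L of length r + s·k having τ as a suffix. -/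
/-- Evaluation of a word over `Σ = {0,…,d−1}` base `d`, least significant digit first. -/
def evalNat {d : ℕ} : List (Fin d) → ℕ
  | [] => 0
  | k :: σ => (k : ℕ) + d * evalNat σ

/-- `A ⊆ ℕ` is `d`-automatic: `{σ ∈ Σ* : [σ] ∈ A}` is regular. -/
def AutomaticN (d : ℕ) (A : Set ℕ) : Prop :=
  RegularLang {σ : List (Fin d) | evalNat σ ∈ A}

/-- `A ⊆ ℕ` is generic in ℕ if finitely many (possibly negative) integer translates
of `A` cover ℕ. -/
def GenericN (A : Set ℕ) : Prop :=
  ∃ T : Finset ℤ, ∀ x : ℕ, ∃ t ∈ T, ∃ a ∈ A, (x : ℤ) = t + (a : ℤ)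

namespace Stmt10Aux

lemma evalNat_append {d : ℕ} (π τ : List (Fin d)) :
    evalNat (π ++ τ) = evalNat π + d ^ π.length * evalNat τ := by
  induction π with
  | nil => simp [evalNat]
  | cons k π ih =>
    show (k : ℕ) + d * evalNat (π ++ τ) = ((k : ℕ) + d * evalNat π) + d ^ (π.length + 1) * evalNat τ
    rw [ih]
    ring

lemma evalNat_lt {d : ℕ} (π : List (Fin d)) : evalNat π < d ^ π.length := by
  induction π with
  | nil => simp [evalNat]
  | cons k π ih =>
    simp only [evalNat, List.length_cons, pow_succ]
    have hk : (k : ℕ) < d := k.isLt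
    calc (k : ℕ) + d * evalNat π < d + d * evalNat π := by omega
    _ = d * (evalNat π + 1) := by ring
    _ ≤ d * d ^ π.length := Nat.mul_le_mul_left d ih
    _ = d ^ π.length * d := by ring

/-- Write `y` as a word of length `m` (base-`d` digits, least significant first). -/
def toWord (d : ℕ) (hd : 0 < d) : ℕ → ℕ → List (Fin d)
  | 0, _ => []
  | m + 1, y => ⟨y % d, Nat.mod_lt _ hd⟩ :: toWord d hd m (y / d)

lemma toWord_length (d : ℕ) (hd : 0 < d) : ∀ m y, (toWord d hd m y).length = m
  | 0, _ => rfl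
  | m + 1, y => by simp [toWord, toWord_length d hd m]

lemma evalNat_toWord (d : ℕ) (hd : 0 < d) :
    ∀ m y, y < d ^ m → evalNat (toWord d hd m y) = y := by
  intro m
  induction m with
  | zero =>
    intro y hy
    simp only [pow_zero] at hy
    have : y = 0 := by omega
    subst this
    rfl
  | succ m ih =>
    intro y hy
    have hdiv : y / d < d ^ m := by
      rw [Nat.div_lt_iff_lt_mul hd]
      calc y < d ^ (m + 1) := hy
      _ = d ^ m * d := pow_succ d m
    show (y % d) + d * evalNat (toWord d hd m (y / d)) = y
    rw [ih (y / d) hdiv]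
    exact Nat.mod_add_div y d

end Stmt10Aux

open Stmt10Aux in
theorem stmt10 (d : ℕ) (hd : 2 ≤ d) (A : Set ℕ) (hauto : AutomaticN d A) :
    GenericN A ↔
      ∀ r s : ℕ, 1 ≤ s → ∀ τ : List (Fin d),
        ∃ (k : ℕ) (ρ : List (Fin d)), evalNat ρ ∈ A ∧ ρ.length = r + s * k ∧ τ <:+ ρ := by
  have hd0 : 0 < d := by omega
  constructor
  · -- Generic → suffix condition (does not use automaticity)
    rintro ⟨T, hT⟩ r s hs τ
    set B : ℕ := T.sup (fun t => t.natAbs) with hB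
    set ℓ : ℕ := τ.length with hℓ
    set v : ℕ := evalNat τ with hv
    set k : ℕ := ℓ + 2 * B + 1 with hk
    have hks : k ≤ s * k := Nat.le_mul_of_pos_left k hs
    have hℓle : ℓ ≤ r + s * k := by omega
    set m : ℕ := r + s * k - ℓ with hm
    have hm1 : 2 * B + 1 ≤ m := by omega
    have hdm : 2 * B < d ^ m := by
      have h1 : m < 2 ^ m := Nat.lt_two_pow_self (n := m)
      have h2 : 2 ^ m ≤ d ^ m := Nat.pow_le_pow_left hd m
      omega
    set P : ℕ := d ^ m with hP
    set w : ℕ := P * v with hw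
    obtain ⟨t, htT, a, haA, hxa⟩ := hT (w + B)
    have htB : t.natAbs ≤ B := Finset.le_sup (f := fun t => t.natAbs) htT
    have hrange : w ≤ a ∧ a < w + P := by omega
    refine ⟨k, toWord d hd0 m (a - w) ++ τ, ?_, ?_, ?_⟩
    · have heq : evalNat (toWord d hd0 m (a - w) ++ τ) = (a - w) + w := by
        rw [evalNat_append, toWord_length,
          evalNat_toWord d hd0 m _ (by omega), ← hv, ← hP, ← hw]
      rw [heq]
      have : (a - w) + w = a := by omega
      rwa [this]
    · rw [List.length_append, toWord_length, ← hℓ]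
      omega
    · exact ⟨_, rfl⟩
  · -- suffix condition → Generic
    intro h
    by_contra hng
    obtain ⟨Q, hQfin, M, hM⟩ := hauto
    -- reachable-state sets and their eventual periodicity
    set F : Set Q → Set Q := fun s => {q | ∃ p ∈ s, ∃ a : Fin d, M.step p a = q} with hF
    set S : ℕ → Set Q := fun j => F^[j] {M.start} with hSdef
    have hmemS : ∀ j q, q ∈ S j ↔
        ∃ π : List (Fin d), π.length = j ∧ M.evalFrom M.start π = q := by
      intro j
      induction j with
      | zero =>
        intro q
        constructor
        · intro hq
          simp only [hSdef, Function.iterate_zero, id, Set.mem_singleton_iff] at hq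
          exact ⟨[], rfl, by simpa using hq.symm⟩
        · rintro ⟨π, hπ, hev⟩
          have : π = [] := List.length_eq_zero_iff.mp hπ
          subst this
          simp only [hSdef, Function.iterate_zero, id, Set.mem_singleton_iff]
          simpa using hev.symm
      | succ j ih =>
        intro q
        have hstep : S (j + 1) = F (S j) := by
          simp only [hSdef, Function.iterate_succ_apply']
        rw [hstep]
        constructor
        · rintro ⟨p, hp, a, ha⟩
          obtain ⟨π, hπl, hπe⟩ := (ih p).mp hp
          refine ⟨π ++ [a], by simp [hπl], ?_⟩
          rw [DFA.evalFrom_of_append, hπe]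
          exact ha
        · rintro ⟨π, hπl, hπe⟩
          have hne : π ≠ [] := by intro hnil; simp [hnil] at hπl
          have hdec := List.dropLast_append_getLast hne
          refine ⟨M.evalFrom M.start π.dropLast,
            (ih _).mpr ⟨π.dropLast, by simp [List.length_dropLast, hπl], rfl⟩,
            π.getLast hne, ?_⟩
          have hkey : M.evalFrom M.start (π.dropLast ++ [π.getLast hne]) = q := by
            rw [hdec]; exact hπe
          rw [DFA.evalFrom_of_append] at hkey
          exact hkey
    haveI : Finite Q := Finite.of_fintype Q
    obtain ⟨j₁, j₂, hne, hSeq⟩ := Finite.exists_ne_map_eq_of_infinite S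
    obtain ⟨u, c, hc, hSuc⟩ : ∃ u c : ℕ, 1 ≤ c ∧ S u = S (u + c) := by
      rcases Nat.lt_or_ge j₁ j₂ with hlt | hge
      · refine ⟨j₁, j₂ - j₁, by omega, ?_⟩
        have e : j₁ + (j₂ - j₁) = j₂ := by omega
        rw [e]; exact hSeq
      · have hlt : j₂ < j₁ := by omega
        refine ⟨j₂, j₁ - j₂, by omega, ?_⟩
        have e : j₂ + (j₁ - j₂) = j₁ := by omega
        rw [e]; exact hSeq.symm
    have hper : ∀ k : ℕ, S (u + c * k) = S u := by
      intro k
      induction k with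
      | zero => simp
      | succ k ih =>
        have harith : u + c * (k + 1) = c + (u + c * k) := by ring
        have h1 : S (u + c * (k + 1)) = F^[c] (S (u + c * k)) := by
          simp only [hSdef, harith, Function.iterate_add_apply]
        have h2 : S (u + c) = F^[c] (S u) := by
          have e : u + c = c + u := by ring
          simp only [hSdef, e, Function.iterate_add_apply]
        rw [h1, ih, ← h2, ← hSuc]
    -- extract an aligned gap of A at scale u
    set P : ℕ := d ^ u with hP
    have hP0 : 0 < P := pow_pos hd0 u
    rw [GenericN] at hng
    push_neg at hng
    obtain ⟨x, hx⟩ := hng (Finset.Icc (-(2 * P : ℤ)) (2 * P))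
    set H : ℕ := x / P + 1 with hH
    have hdam : P * (x / P) + x % P = x := Nat.div_add_mod x P
    have hmlt : x % P < P := Nat.mod_lt x hP0
    have hPH : P * H = P * (x / P) + P := by rw [hH]; ring
    have hgap : ∀ a ∈ A, ¬ (P * H ≤ a ∧ a < P * H + P) := by
      rintro a haA ⟨h1, h2⟩
      have hx1 : x ≤ a := by omega
      have hx2 : a ≤ x + 2 * P := by omega
      have hmem : ((x : ℤ) - a) ∈ Finset.Icc (-(2 * P : ℤ)) (2 * P) := by
        rw [Finset.mem_Icc]
        omega
      exact hx ((x : ℤ) - a) hmem a haA (by ring)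
    -- the suffix: base-d digits of H
    have hHlt : H < d ^ H := Nat.lt_pow_self (n := H) (by omega)
    set τ : List (Fin d) := toWord d hd0 H H with hτ
    have hτlen : τ.length = H := toWord_length d hd0 H H
    have hτval : evalNat τ = H := evalNat_toWord d hd0 H H hHlt
    -- apply the hypothesis with r = H + u, s = c
    obtain ⟨k, ρ, hρA, hρlen, hρsuf⟩ := h (H + u) c hc τ
    obtain ⟨π, rfl⟩ := hρsuf
    have hπlen : π.length = u + c * k := by
      rw [List.length_append, hτlen] at hρlen
      omega
    -- the state reached by π is also reached by a word of length u
    have hπS : M.evalFrom M.start π ∈ S (u + c * k) :=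
      (hmemS (u + c * k) _).mpr ⟨π, hπlen, rfl⟩
    rw [hper k] at hπS
    obtain ⟨π', hπ'len, hπ'ev⟩ := (hmemS u _).mp hπS
    -- transfer acceptance
    have hρacc : (π ++ τ) ∈ M.accepts := by rw [hM]; exact hρA
    have hkey : M.evalFrom M.start (π' ++ τ) = M.evalFrom M.start (π ++ τ) := by
      rw [DFA.evalFrom_of_append, DFA.evalFrom_of_append, hπ'ev]
    have hacc' : (π' ++ τ) ∈ M.accepts := by
      rw [DFA.mem_accepts] at hρacc ⊢
      show M.evalFrom M.start (π' ++ τ) ∈ M.accept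
      rw [hkey]
      exact hρacc
    have haA' : evalNat (π' ++ τ) ∈ A := by rw [hM] at hacc'; exact hacc'
    -- but its value lies in the gap
    have hval : evalNat (π' ++ τ) = evalNat π' + P * H := by
      rw [evalNat_append, hπ'len, hτval, ← hP]
    have hπ'lt : evalNat π' < P := by
      have := evalNat_lt π'
      rwa [hπ'len, ← hP] at this
    exact hgap _ haA' ⟨by omega, by omega⟩
end
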